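/- arXiv:2603.24884 — 4 statements merged into one kernel-verified Lean document; each statement's English description precedes it below -/
import Mathlib

section
/- For every integer n ≥ 2 and every integer d with 0 ≤ d ≤ n, the element z^d is nonzero in VG_n. -/
/-!
Send `x_{ij}` to `y_i` for `i < j` and to `-y_j` for `i > j`, where the `y_i` are square-zero
elements of a commutative `ℚ`-algebra: antisymmetry is built in, and for `i < j < k` the triangle
relation becomes `-y_i²`, so this defines an algebra map out of `VG_n`. Taking `y_i = X_i` in
`ℚ[X_1, …, X_n]` modulo the squares of the variables and `y_{n+1} = 0` sends `z` to
`X_1 + ⋯ + X_n`, whose `n`-th power is `n! X_1 ⋯ X_n ≠ 0`. Hence `z^n ≠ 0`, and so `z^d ≠ 0` for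
`d ≤ n`.
-/

noncomputable section

/-- Index set for the variables `x_{ij}` with `i ≠ j` in `{1, …, n+1}` (as `Fin (n+1)`). -/
abbrev VGidx (n : ℕ) := {p : Fin (n+1) × Fin (n+1) // p.1 ≠ p.2}

/-- The defining ideal of the Varchenko–Gel'fand ring of the braid arrangement `A_n`. -/
def VGrel (n : ℕ) : Ideal (MvPolynomial (VGidx n) ℚ) :=
  Ideal.span
    ({q | ∃ v : VGidx n, q = MvPolynomial.X v ^ 2} ∪
     {q | ∃ (i j : Fin (n+1)) (hij : i ≠ j),
        q = MvPolynomial.X (⟨(i,j),hij⟩ : VGidx n) + MvPolynomial.X ⟨(j,i),hij.symm⟩} ∪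
     {q | ∃ (i j k : Fin (n+1)) (hij : i ≠ j) (hjk : j ≠ k) (hki : k ≠ i),
        q = MvPolynomial.X (⟨(i,j),hij⟩ : VGidx n) * MvPolynomial.X ⟨(j,k),hjk⟩
          + MvPolynomial.X (⟨(j,k),hjk⟩ : VGidx n) * MvPolynomial.X ⟨(k,i),hki⟩
          + MvPolynomial.X (⟨(k,i),hki⟩ : VGidx n) * MvPolynomial.X ⟨(i,j),hij⟩})

/-- The Varchenko–Gel'fand ring `VG_n`. -/
abbrev VG (n : ℕ) := MvPolynomial (VGidx n) ℚ ⧸ VGrel n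

/-- The action of a permutation of `{1, …, n+1}` on the variable indices. -/
def VGpermIdx (n : ℕ) (σ : Equiv.Perm (Fin (n+1))) : VGidx n → VGidx n :=
  fun v => ⟨(σ v.1.1, σ v.1.2), fun h => v.2 (σ.injective h)⟩

lemma VGrel_stable (n : ℕ) (σ : Equiv.Perm (Fin (n+1))) :
    ∀ a ∈ VGrel n, (MvPolynomial.rename (VGpermIdx n σ)) a ∈ VGrel n := by
  intro a ha
  have hle : (VGrel n).map (MvPolynomial.rename (VGpermIdx n σ)).toRingHom ≤ VGrel n := by
    rw [VGrel, Ideal.map_span, Ideal.span_le]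
    rintro q ⟨p, hp, rfl⟩
    apply Ideal.subset_span
    simp only [Set.mem_union, Set.mem_setOf_eq] at hp ⊢
    rcases hp with ((⟨v, rfl⟩ | ⟨i, j, hij, rfl⟩) | ⟨i, j, k, hij, hjk, hki, rfl⟩)
    · refine Or.inl (Or.inl ⟨VGpermIdx n σ v, ?_⟩)
      simp [map_pow, MvPolynomial.rename_X]
    · refine Or.inl (Or.inr ⟨σ i, σ j, fun h => hij (σ.injective h), ?_⟩)
      simp [map_add, MvPolynomial.rename_X, VGpermIdx]
    · refine Or.inr ⟨σ i, σ j, σ k, fun h => hij (σ.injective h), fun h => hjk (σ.injective h),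
        fun h => hki (σ.injective h), ?_⟩
      simp [map_add, map_mul, MvPolynomial.rename_X, VGpermIdx]
  exact hle (Ideal.mem_map_of_mem _ ha)

/-- The algebra automorphism of `VG_n` induced by a permutation of `{1, …, n+1}`. -/
def VGperm (n : ℕ) (σ : Equiv.Perm (Fin (n+1))) : VG n →ₐ[ℚ] VG n :=
  Ideal.Quotient.liftₐ (VGrel n)
    ((Ideal.Quotient.mkₐ ℚ (VGrel n)).comp (MvPolynomial.rename (VGpermIdx n σ)))
    (fun a ha => by
      simp only [AlgHom.comp_apply, Ideal.Quotient.mkₐ_eq_mk]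
      exact Ideal.Quotient.eq_zero_iff_mem.mpr (VGrel_stable n σ a ha))

/-- The subalgebra of `S_n`-invariants of `VG_n`, where `S_n` is the subgroup of permutations
of `{1, …, n+1}` fixing `n+1`. -/
def VGinv (n : ℕ) : Subalgebra ℚ (VG n) where
  carrier := {x | ∀ σ : Equiv.Perm (Fin (n+1)), σ (Fin.last n) = Fin.last n → VGperm n σ x = x}
  mul_mem' := fun hx hy σ hσ => by rw [map_mul, hx σ hσ, hy σ hσ]
  add_mem' := fun hx hy σ hσ => by rw [map_add, hx σ hσ, hy σ hσ]
  one_mem' := fun σ _ => map_one _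
  zero_mem' := fun σ _ => map_zero _
  algebraMap_mem' := fun r σ hσ => AlgHom.commutes _ r

/-- The subalgebra of `S_{n+1}`-invariants of `VG_n`. -/
def VGinvFull (n : ℕ) : Subalgebra ℚ (VG n) where
  carrier := {x | ∀ σ : Equiv.Perm (Fin (n+1)), VGperm n σ x = x}
  mul_mem' := fun hx hy σ => by rw [map_mul, hx σ, hy σ]
  add_mem' := fun hx hy σ => by rw [map_add, hx σ, hy σ]
  one_mem' := fun σ => map_one _
  zero_mem' := fun σ => map_zero _
  algebraMap_mem' := fun r σ => AlgHom.commutes _ r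

/-- The element `z = x_{1,n+1} + x_{2,n+1} + ⋯ + x_{n,n+1}` of `VG_n`. -/
def zVG (n : ℕ) : VG n :=
  Ideal.Quotient.mk (VGrel n)
    (∑ i : Fin n, MvPolynomial.X ⟨(i.castSucc, Fin.last n), (Fin.castSucc_lt_last i).ne⟩)

open MvPolynomial Finset
open scoped Nat

section SquareZero

variable {R : Type*} [CommRing R]

theorem add_pow_succ_of_sq_eq_zero {x : R} (hx : x ^ 2 = 0) (y : R) (m : ℕ) :
    (x + y) ^ (m + 1) = y ^ (m + 1) + (m + 1) * x * y ^ m := by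
  induction m with
  | zero => simp [add_comm]
  | succ m ih =>
    rw [pow_succ', ih]
    push_cast
    linear_combination (m + 1 : R) * y ^ m * hx

variable {ι : Type*} [DecidableEq ι] {f : ι → R}

theorem sum_pow_card_succ_eq_zero_of_sq_eq_zero (t : Finset ι) (hf : ∀ i ∈ t, f i ^ 2 = 0) :
    (∑ i ∈ t, f i) ^ (#t + 1) = 0 := by
  induction t using Finset.induction_on with
  | empty => simp
  | insert a t ha ih =>
    have hS := ih fun i hi => hf i (mem_insert_of_mem hi)
    rw [sum_insert ha, card_insert_of_notMem ha,
      add_pow_succ_of_sq_eq_zero (hf a (mem_insert_self a t)), pow_succ, hS]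
    simp

theorem sum_pow_card_of_sq_eq_zero (t : Finset ι) (hf : ∀ i ∈ t, f i ^ 2 = 0) :
    (∑ i ∈ t, f i) ^ #t = (#t)! * ∏ i ∈ t, f i := by
  induction t using Finset.induction_on with
  | empty => simp
  | insert a t ha ih =>
    have hf' : ∀ i ∈ t, f i ^ 2 = 0 := fun i hi => hf i (mem_insert_of_mem hi)
    rw [sum_insert ha, card_insert_of_notMem ha, prod_insert ha,
      add_pow_succ_of_sq_eq_zero (hf a (mem_insert_self a t)),
      sum_pow_card_succ_eq_zero_of_sq_eq_zero t hf', ih hf', Nat.factorial_succ]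
    push_cast
    ring

end SquareZero

namespace MvPolynomial

variable (σ R : Type*) [CommSemiring R]

def squaresIdeal : Ideal (MvPolynomial σ R) :=
  Ideal.span (Set.range fun i => X i ^ 2)

variable {σ R}

theorem prod_X_notMem_squaresIdeal [Nontrivial R] [DecidableEq σ] (t : Finset σ) :
    ∏ i ∈ t, X i ∉ squaresIdeal σ R := by
  have hgen : (Set.range fun i => (X i ^ 2 : MvPolynomial σ R)) =
      (fun s => monomial s (1 : R)) '' Set.range fun i => Finsupp.single i 2 := by
    rw [← Set.range_comp]
    simp only [Function.comp_def, X_pow_eq_monomial]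
  rw [squaresIdeal, hgen, mem_ideal_span_monomial_image]
  simp only [X, ← monomial_sum_one]
  intro h
  obtain ⟨_, ⟨j, rfl⟩, hj⟩ := h (∑ i ∈ t, Finsupp.single i 1) (by simp)
  have hj2 := hj j
  simp only [Finset.sum_apply', Finsupp.single_apply, Finset.sum_ite_eq'] at hj2
  split_ifs at hj2 <;> omega

theorem mk_X_sq_eq_zero_mod_squaresIdeal {S : Type*} [CommRing S] (i : σ) :
    Ideal.Quotient.mk (squaresIdeal σ S) (X i) ^ 2 = 0 := by
  rw [← map_pow, Ideal.Quotient.eq_zero_iff_mem]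
  exact Ideal.subset_span ⟨i, rfl⟩

theorem sum_X_pow_card_ne_zero_mod_squaresIdeal {K : Type*} [Field K] [CharZero K] [Fintype σ] :
    (∑ i, Ideal.Quotient.mk (squaresIdeal σ K) (X i)) ^ Fintype.card σ ≠ 0 := by
  classical
  rw [← Finset.card_univ,
    sum_pow_card_of_sq_eq_zero _ fun i _ => mk_X_sq_eq_zero_mod_squaresIdeal i, ← map_prod,
    ← nsmul_eq_mul, ← Nat.cast_smul_eq_nsmul K]
  refine smul_ne_zero (Nat.cast_ne_zero.mpr (Nat.factorial_ne_zero _)) ?_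
  rw [Ne, Ideal.Quotient.eq_zero_iff_mem]
  exact prod_X_notMem_squaresIdeal _

end MvPolynomial

section Lift

variable {n : ℕ} {A : Type*} [CommRing A] [Algebra ℚ A] (y : Fin (n + 1) → A)

def VGliftVal (v : VGidx n) : A :=
  if v.1.1 < v.1.2 then y v.1.1 else -y v.1.2

theorem aeval_VGliftVal_eq_zero_of_mem (hy : ∀ i, y i ^ 2 = 0) :
    ∀ p ∈ VGrel n, aeval (R := ℚ) (VGliftVal y) p = 0 := by
  suffices VGrel n ≤ RingHom.ker (aeval (R := ℚ) (VGliftVal y)) from fun p hp => this hp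
  rw [VGrel, Ideal.span_le]
  rintro q ((⟨v, rfl⟩ | ⟨i, j, hij, rfl⟩) | ⟨i, j, k, hij, hjk, hki, rfl⟩) <;>
    simp only [SetLike.mem_coe, RingHom.mem_ker, map_add, map_mul, map_pow, aeval_X, VGliftVal]
  · split_ifs <;> simp [hy]
  · rcases hij.lt_or_gt with h | h
    · simp [h, h.not_gt]
    · simp [h, h.not_gt]
  · split_ifs <;> first
      | (exfalso; order)
      | linear_combination -hy i
      | linear_combination -hy j
      | linear_combination -hy k

def VGlift (hy : ∀ i, y i ^ 2 = 0) : VG n →ₐ[ℚ] A :=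
  Ideal.Quotient.liftₐ (VGrel n) (aeval (VGliftVal y)) (aeval_VGliftVal_eq_zero_of_mem y hy)

theorem VGlift_zVG (hy : ∀ i, y i ^ 2 = 0) : VGlift y hy (zVG n) = ∑ i : Fin n, y i.castSucc := by
  change aeval (VGliftVal y) _ = _
  simp [VGliftVal, Fin.castSucc_lt_last]

end Lift

theorem zVG_pow_ne_zero_general (n : ℕ) (d : ℕ) (hd : d ≤ n) : zVG n ^ d ≠ 0 := by
  let y : Fin (n + 1) → MvPolynomial (Fin n) ℚ ⧸ squaresIdeal (Fin n) ℚ :=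
    Fin.lastCases 0 fun i => Ideal.Quotient.mk _ (X i)
  have hy : ∀ i, y i ^ 2 = 0 :=
    Fin.lastCases (by simp [y]) fun i => by simpa [y] using mk_X_sq_eq_zero_mod_squaresIdeal i
  intro hzd
  apply sum_X_pow_card_ne_zero_mod_squaresIdeal (σ := Fin n) (K := ℚ)
  simpa [y, VGlift_zVG] using congrArg (VGlift y hy) (pow_eq_zero_of_le hd hzd)

/-- For every integer `n ≥ 2` and every `0 ≤ d ≤ n`, `z^d ≠ 0` in `VG_n`. -/
theorem zVG_pow_ne_zero (n : ℕ) (hn : 2 ≤ n) (d : ℕ) (hd : d ≤ n) : zVG n ^ d ≠ 0 :=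
  zVG_pow_ne_zero_general n d hd

end
end

section
/- For every integer n ≥ 2, the element g^p is zero in OS_n, where p = ⌊(n+1)/2⌋. -/
noncomputable section

/-- Unordered pairs of distinct elements of `{1, …, n+1}` (as `Fin (n+1)`). -/
abbrev OSidx (n : ℕ) := {s : Sym2 (Fin (n+1)) // ¬ s.IsDiag}

/-- The exterior algebra over `ℚ` on generators indexed by unordered pairs of distinct
elements of `{1, …, n+1}`. -/
abbrev OSamb (n : ℕ) := ExteriorAlgebra ℚ (OSidx n →₀ ℚ)

/-- The generator `e_{ij} = e_{ji}` of the ambient exterior algebra. -/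
def eAmb (n : ℕ) (i j : Fin (n+1)) (h : i ≠ j) : OSamb n :=
  ExteriorAlgebra.ι ℚ (Finsupp.single ⟨s(i,j), by simp [Sym2.mk_isDiag_iff, h]⟩ 1)

/-- The Orlik–Solomon relations for the braid arrangement. -/
inductive OSRel (n : ℕ) : OSamb n → OSamb n → Prop
  | rel (i j k : Fin (n+1)) (hij : i ≠ j) (hjk : j ≠ k) (hik : i ≠ k) :
      OSRel n (eAmb n i k hik * eAmb n j k hjk - eAmb n i j hij * eAmb n j k hjk
        + eAmb n i j hij * eAmb n i k hik) 0

/-- The Orlik–Solomon algebra `OS_n` of the braid arrangement `A_n`. -/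
abbrev OS (n : ℕ) := RingQuot (OSRel n)

/-- The generator `e_{ij}` of `OS_n`, defined to be `0` when `i = j`. -/
def eOS (n : ℕ) (i j : Fin (n+1)) : OS n :=
  if h : i = j then 0 else RingQuot.mkAlgHom ℚ (OSRel n) (eAmb n i j h)

/-- `a = Σ_{1 ≤ i < j ≤ n} e_{ij}`. -/
def aOS (n : ℕ) : OS n :=
  ∑ p ∈ Finset.univ.filter (fun p : Fin n × Fin n => p.1 < p.2),
    eOS n p.1.castSucc p.2.castSucc

/-- `m = Σ_{1 ≤ i ≤ n} e_{i,n+1}`. -/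
def mOS (n : ℕ) : OS n := ∑ i : Fin n, eOS n i.castSucc (Fin.last n)

/-- `c = Σ_{1 ≤ i < j ≤ n} (e_{ij} e_{i,n+1} + e_{ij} e_{j,n+1})`. -/
def cOS (n : ℕ) : OS n :=
  ∑ p ∈ Finset.univ.filter (fun p : Fin n × Fin n => p.1 < p.2),
    (eOS n p.1.castSucc p.2.castSucc * eOS n p.1.castSucc (Fin.last n)
      + eOS n p.1.castSucc p.2.castSucc * eOS n p.2.castSucc (Fin.last n))

/-- `g = a·m − p·c` with `p = ⌊(n+1)/2⌋`. -/
def gOS (n : ℕ) : OS n := aOS n * mOS n - ((n+1)/2 : ℕ) • cOS n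

/-- The action of a permutation on the index set of unordered pairs. -/
def OSpermIdx (n : ℕ) (σ : Equiv.Perm (Fin (n+1))) : OSidx n → OSidx n :=
  fun s => ⟨Sym2.map σ s.1, by
    obtain ⟨⟨x, y⟩, hs⟩ := s
    intro hd
    rw [Sym2.map_pair_eq, Sym2.mk_isDiag_iff] at hd
    exact hs (Sym2.mk_isDiag_iff.mpr (σ.injective hd))⟩

/-- The algebra endomorphism of the ambient exterior algebra induced by a permutation. -/
def OSpermAmb (n : ℕ) (σ : Equiv.Perm (Fin (n+1))) : OSamb n →ₐ[ℚ] OSamb n :=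
  ExteriorAlgebra.lift ℚ
    ⟨(ExteriorAlgebra.ι ℚ).comp (Finsupp.lmapDomain ℚ ℚ (OSpermIdx n σ)),
      fun m => by simp [ExteriorAlgebra.ι_sq_zero]⟩

lemma OSpermAmb_e (n : ℕ) (σ : Equiv.Perm (Fin (n+1))) (i j : Fin (n+1)) (h : i ≠ j) :
    OSpermAmb n σ (eAmb n i j h) = eAmb n (σ i) (σ j) (fun hh => h (σ.injective hh)) := by
  simp only [OSpermAmb, eAmb, ExteriorAlgebra.lift_ι_apply, LinearMap.comp_apply,
    Finsupp.lmapDomain_apply, Finsupp.mapDomain_single]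
  congr 1

/-- The algebra endomorphism of `OS_n` induced by a permutation of `{1, …, n+1}`. -/
def OSperm (n : ℕ) (σ : Equiv.Perm (Fin (n+1))) : OS n →ₐ[ℚ] OS n :=
  RingQuot.liftAlgHom ℚ
    ⟨(RingQuot.mkAlgHom ℚ (OSRel n)).comp (OSpermAmb n σ), by
      intro x y h
      cases h with
      | rel i j k hij hjk hik =>
        simp only [AlgHom.comp_apply, map_sub, map_add, map_mul, map_zero, OSpermAmb_e]
        have := RingQuot.mkAlgHom_rel ℚ (OSRel.rel (σ i) (σ j) (σ k)
          (fun hh => hij (σ.injective hh)) (fun hh => hjk (σ.injective hh))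
          (fun hh => hik (σ.injective hh)))
        simpa [map_sub, map_add, map_mul] using this⟩

/-- The subalgebra of `S_n`-invariants of `OS_n`, where `S_n` is the subgroup of permutations
of `{1, …, n+1}` fixing `n+1`. -/
def OSinv (n : ℕ) : Subalgebra ℚ (OS n) where
  carrier := {x | ∀ σ : Equiv.Perm (Fin (n+1)), σ (Fin.last n) = Fin.last n → OSperm n σ x = x}
  mul_mem' := fun hx hy σ hσ => by rw [map_mul, hx σ hσ, hy σ hσ]
  add_mem' := fun hx hy σ hσ => by rw [map_add, hx σ hσ, hy σ hσ]
  one_mem' := fun σ _ => map_one _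
  zero_mem' := fun σ _ => map_zero _
  algebraMap_mem' := fun r σ hσ => AlgHom.commutes _ r

/-- The subalgebra of `S_{n+1}`-invariants of `OS_n`. -/
def OSinvFull (n : ℕ) : Subalgebra ℚ (OS n) where
  carrier := {x | ∀ σ : Equiv.Perm (Fin (n+1)), OSperm n σ x = x}
  mul_mem' := fun hx hy σ => by rw [map_mul, hx σ, hy σ]
  add_mem' := fun hx hy σ => by rw [map_add, hx σ, hy σ]
  one_mem' := fun σ => map_one _
  zero_mem' := fun σ => map_zero _
  algebraMap_mem' := fun r σ => AlgHom.commutes _ r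

/-- The degree-`d` graded piece of `OS_n`: the image in `OS_n` of the degree-`d` component of
the exterior algebra. -/
def OSdeg (n : ℕ) (d : ℕ) : Submodule ℚ (OS n) :=
  Submodule.map (RingQuot.mkAlgHom ℚ (OSRel n)).toLinearMap
    ((LinearMap.range (ExteriorAlgebra.ι ℚ : (OSidx n →₀ ℚ) →ₗ[ℚ] OSamb n)) ^ d)

/-- The degree-`d` graded piece of the invariant subalgebra `OS_n^{S_n}`. -/
def OSinvDeg (n : ℕ) (d : ℕ) : Submodule ℚ (OS n) :=
  Subalgebra.toSubmodule (OSinv n) ⊓ OSdeg n d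


namespace OSAux


variable {n : ℕ}

abbrev mkOS (n : ℕ) : OSamb n →ₐ[ℚ] OS n := RingQuot.mkAlgHom ℚ (OSRel n)

lemma eOS_eq_mk {i j : Fin (n+1)} (h : i ≠ j) : eOS n i j = mkOS n (eAmb n i j h) :=
  dif_neg h

lemma eAmb_symm (i j : Fin (n+1)) (h : i ≠ j) : eAmb n i j h = eAmb n j i h.symm := by
  unfold eAmb
  congr 1
  congr 1
  exact Subtype.ext Sym2.eq_swap

lemma eOS_symm (i j : Fin (n+1)) : eOS n i j = eOS n j i := by
  by_cases h : i = j
  · subst h; rfl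
  · rw [eOS_eq_mk h, eOS_eq_mk (Ne.symm h), eAmb_symm i j h]

lemma eAmb_anticomm (i j k l : Fin (n+1)) (h1 : i ≠ j) (h2 : k ≠ l) :
    eAmb n i j h1 * eAmb n k l h2 = -(eAmb n k l h2 * eAmb n i j h1) := by
  refine eq_neg_of_add_eq_zero_left ?_
  exact ExteriorAlgebra.ι_add_mul_swap _ _

lemma eOS_anticomm (i j k l : Fin (n+1)) :
    eOS n i j * eOS n k l = -(eOS n k l * eOS n i j) := by
  by_cases h1 : i = j
  · subst h1; simp [eOS]
  by_cases h2 : k = l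
  · subst h2; simp [eOS]
  rw [eOS_eq_mk h1, eOS_eq_mk h2, ← map_mul, ← map_mul, eAmb_anticomm i j k l h1 h2, map_neg]

lemma eOS_sq (i j : Fin (n+1)) : eOS n i j * eOS n i j = 0 := by
  by_cases h : i = j
  · subst h; simp [eOS]
  rw [eOS_eq_mk h, ← map_mul]
  unfold eAmb
  rw [ExteriorAlgebra.ι_sq_zero, map_zero]

lemma eOS_rel (i j k : Fin (n+1)) (hij : i ≠ j) (hjk : j ≠ k) (hik : i ≠ k) :
    eOS n i k * eOS n j k = eOS n i j * eOS n j k - eOS n i j * eOS n i k := by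
  have h0 := RingQuot.mkAlgHom_rel ℚ (OSRel.rel i j k hij hjk hik)
  rw [map_add, map_sub, map_mul, map_mul, map_mul, map_zero] at h0
  rw [eOS_eq_mk hik, eOS_eq_mk hjk, eOS_eq_mk hij]
  linear_combination (norm := noncomm_ring) h0

/-! ### products over lists -/

def E (n : ℕ) : Fin (n+1) × Fin (n+1) → OS n := fun p => eOS n p.1 p.2

def Eprod (n : ℕ) (L : List (Fin (n+1) × Fin (n+1))) : OS n := (L.map (E n)).prod

lemma Eprod_append (L1 L2 : List (Fin (n+1) × Fin (n+1))) :
    Eprod n (L1 ++ L2) = Eprod n L1 * Eprod n L2 := by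
  simp [Eprod]

lemma Eprod_cons (x) (L : List (Fin (n+1) × Fin (n+1))) :
    Eprod n (x :: L) = E n x * Eprod n L := by
  simp [Eprod]

lemma Eprod_mul_e (L : List (Fin (n+1) × Fin (n+1))) (y) :
    Eprod n L * E n y = ((-1 : ℚ)^L.length) • (E n y * Eprod n L) := by
  induction L with
  | nil => simp [Eprod]
  | cons z L ih =>
    rw [Eprod_cons, mul_assoc, ih, mul_smul_comm, ← mul_assoc]
    have : E n z * E n y = -(E n y * E n z) := eOS_anticomm _ _ _ _
    rw [this, List.length_cons, pow_succ]
    rw [neg_mul, mul_assoc]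
    simp [smul_smul, mul_comm]

lemma sortPair (x : Fin (n+1) × Fin (n+1)) (h : x.1 ≠ x.2) :
    ∃ a b : Fin (n+1), a < b ∧ E n x = eOS n a b ∧ max x.1.1 x.2.1 = b.1 := by
  rcases lt_or_gt_of_ne h with hlt | hgt
  · exact ⟨x.1, x.2, hlt, rfl, Nat.max_eq_right (le_of_lt hlt)⟩
  · exact ⟨x.2, x.1, hgt, eOS_symm _ _, Nat.max_eq_left (le_of_lt hgt)⟩

lemma exists_split {α β : Type*} (f : α → β) :
    ∀ (L : List α), ¬ (L.map f).Nodup →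
    ∃ L1 x L2 y L3, L = L1 ++ x :: (L2 ++ y :: L3) ∧ f x = f y := by
  intro L
  induction L with
  | nil => intro h; simp at h
  | cons a L ih =>
    intro h
    rw [List.map_cons, List.nodup_cons] at h
    by_cases hmem : f a ∈ L.map f
    · obtain ⟨y, hy, hfy⟩ := List.mem_map.mp hmem
      obtain ⟨s, t, rfl⟩ := List.append_of_mem hy
      exact ⟨[], a, s, y, t, by simp, hfy.symm⟩
    · have hnd : ¬ (L.map f).Nodup := fun hn => h ⟨hmem, hn⟩
      obtain ⟨L1, x, L2, y, L3, rfl, hxy⟩ := ih hnd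
      exact ⟨a :: L1, x, L2, y, L3, by simp, hxy⟩

def fmax (n : ℕ) : Fin (n+1) × Fin (n+1) → ℕ := fun p => max p.1.1 p.2.1

/-- The key combinatorial lemma: a product of `n+1` generators vanishes. -/
lemma eprod_eq_zero : ∀ (N : ℕ) (L : List (Fin (n+1) × Fin (n+1))),
    (L.map (fmax n)).sum ≤ N → L.length = n + 1 → Eprod n L = 0 := by
  intro N
  induction N using Nat.strong_induction_on with
  | _ N ihN =>
  intro L hμ hlen
  by_cases hdiag : ∃ p ∈ L, p.1 = p.2
  · obtain ⟨p, hp, hpd⟩ := hdiag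
    refine List.prod_eq_zero ?_
    refine List.mem_map.mpr ⟨p, hp, ?_⟩
    simp [E, eOS, hpd]
  · push_neg at hdiag
    have hnd : ¬ (L.map (fmax n)).Nodup := by
      intro hnodup
      have hsub : (L.map (fmax n)).toFinset ⊆ (Finset.range (n+1)).erase 0 := by
        intro v hv
        rw [List.mem_toFinset] at hv
        obtain ⟨p, hp, rfl⟩ := List.mem_map.mp hv
        refine Finset.mem_erase.mpr ⟨?_, Finset.mem_range.mpr ?_⟩
        · intro h0
          have h1 : p.1.1 = 0 := Nat.le_zero.mp (h0 ▸ Nat.le_max_left p.1.1 p.2.1)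
          have h2 : p.2.1 = 0 := Nat.le_zero.mp (h0 ▸ Nat.le_max_right p.1.1 p.2.1)
          exact hdiag p hp (Fin.ext (h1.trans h2.symm))
        · exact max_lt p.1.2 p.2.2
      have hcard := Finset.card_le_card hsub
      rw [List.toFinset_card_of_nodup hnodup] at hcard
      rw [Finset.card_erase_of_mem (Finset.mem_range.mpr (Nat.succ_pos n)),
        Finset.card_range] at hcard
      simp only [List.length_map, hlen] at hcard
      omega
    obtain ⟨L1, x, L2, y, L3, rfl, hfxy⟩ := exists_split (fmax n) L hnd
    have hxmem : x ∈ L1 ++ x :: (L2 ++ y :: L3) := by simp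
    have hymem : y ∈ L1 ++ x :: (L2 ++ y :: L3) := by simp
    obtain ⟨a, b, hab, hEx, hbx⟩ := sortPair x (hdiag x hxmem)
    obtain ⟨a', b', hab', hEy, hby⟩ := sortPair y (hdiag y hymem)
    have hbb : b = b' := by
      refine Fin.ext ?_
      rw [← hbx, ← hby]
      exact hfxy
    subst hbb
    -- rewrite the product
    have key : Eprod n (L1 ++ x :: (L2 ++ y :: L3)) =
        ((-1 : ℚ)^L2.length) •
          (Eprod n L1 * ((eOS n a b * eOS n a' b) * (Eprod n L2 * Eprod n L3))) := by
      rw [Eprod_append, Eprod_cons, Eprod_append, Eprod_cons]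
      have step : Eprod n L2 * (E n y * Eprod n L3) =
          ((-1 : ℚ)^L2.length) • (E n y * (Eprod n L2 * Eprod n L3)) := by
        rw [← mul_assoc, Eprod_mul_e, smul_mul_assoc, mul_assoc]
      rw [step, mul_smul_comm, mul_smul_comm, hEx, hEy]
      simp only [mul_assoc]
    by_cases haa : a = a'
    · subst haa
      rw [key, eOS_sq]
      simp
    · have hak : a ≠ b := ne_of_lt hab
      have hak' : a' ≠ b := ne_of_lt hab'
      rw [key, eOS_rel a a' b haa hak' hak, sub_mul, mul_sub]
      have hX : Eprod n L1 * (eOS n a a' * eOS n a' b * (Eprod n L2 * Eprod n L3)) =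
          Eprod n (L1 ++ (a, a') :: (a', b) :: (L2 ++ L3)) := by
        rw [Eprod_append, Eprod_cons, Eprod_cons, Eprod_append]
        simp only [E]
        noncomm_ring
      have hY : Eprod n L1 * (eOS n a a' * eOS n a b * (Eprod n L2 * Eprod n L3)) =
          Eprod n (L1 ++ (a, a') :: (a, b) :: (L2 ++ L3)) := by
        rw [Eprod_append, Eprod_cons, Eprod_cons, Eprod_append]
        simp only [E]
        noncomm_ring
      -- measures
      have hμold : (L1.map (fmax n)).sum + (fmax n x +
          ((L2.map (fmax n)).sum + (fmax n y + (L3.map (fmax n)).sum))) ≤ N := by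
        simpa [List.map_append, List.sum_append] using hμ
      have hfx : fmax n x = b.1 := hbx
      have hfy : fmax n y = b.1 := hby
      have haval : a.1 < b.1 := hab
      have ha'val : a'.1 < b.1 := hab'
      have hmaxlt : max a.1 a'.1 < b.1 := max_lt haval ha'val
      have h1 : fmax n (a, a') = max a.1 a'.1 := rfl
      have h2 : fmax n (a', b) = b.1 := Nat.max_eq_right (le_of_lt hab')
      have h3 : fmax n (a, b) = b.1 := Nat.max_eq_right (le_of_lt hab)
      have hlen' : (L1 ++ (a, a') :: (a', b) :: (L2 ++ L3)).length = n + 1 := by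
        simp only [List.length_append, List.length_cons] at hlen ⊢
        omega
      have hlen'' : (L1 ++ (a, a') :: (a, b) :: (L2 ++ L3)).length = n + 1 := by
        simp only [List.length_append, List.length_cons] at hlen ⊢
        omega
      have hμX : ((L1 ++ (a, a') :: (a', b) :: (L2 ++ L3)).map (fmax n)).sum < N := by
        simp only [List.map_append, List.map_cons, List.sum_append, List.sum_cons, h1, h2]
        omega
      have hμY : ((L1 ++ (a, a') :: (a, b) :: (L2 ++ L3)).map (fmax n)).sum < N := by
        simp only [List.map_append, List.map_cons, List.sum_append, List.sum_cons, h1, h3]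
        omega
      have hz1 := ihN _ hμX _ le_rfl hlen'
      have hz2 := ihN _ hμY _ le_rfl hlen''
      rw [hX, hY, hz1, hz2]
      simp

/-! ### spans of products of generators -/

def Wdeg (n k : ℕ) : Submodule ℚ (OS n) :=
  Submodule.span ℚ {x : OS n | ∃ L : List (Fin (n+1) × Fin (n+1)), L.length = k ∧ x = Eprod n L}

lemma eOS_mem_Wdeg (i j : Fin (n+1)) : eOS n i j ∈ Wdeg n 1 := by
  refine Submodule.subset_span ⟨[(i, j)], rfl, ?_⟩
  simp [Eprod, E]

lemma eOS_mul_eOS_mem_Wdeg (i j k l : Fin (n+1)) :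
    eOS n i j * eOS n k l ∈ Wdeg n 2 := by
  refine Submodule.subset_span ⟨[(i, j), (k, l)], rfl, ?_⟩
  simp [Eprod, E]

lemma Wdeg_mul_le (k l : ℕ) : Wdeg n k * Wdeg n l ≤ Wdeg n (k + l) := by
  rw [Wdeg, Wdeg, Submodule.span_mul_span]
  refine Submodule.span_le.mpr ?_
  rintro z hz
  rw [Set.mem_mul] at hz
  obtain ⟨x, ⟨L1, hL1, rfl⟩, y, ⟨L2, hL2, rfl⟩, rfl⟩ := hz
  refine Submodule.subset_span ⟨L1 ++ L2, by simp [hL1, hL2], ?_⟩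
  simp [Eprod]

lemma mul_mem_Wdeg {k l : ℕ} {x y : OS n} (hx : x ∈ Wdeg n k) (hy : y ∈ Wdeg n l) :
    x * y ∈ Wdeg n (k + l) :=
  Wdeg_mul_le k l (Submodule.mul_mem_mul hx hy)

lemma aOS_mem : aOS n ∈ Wdeg n 1 :=
  sum_mem fun p _ => eOS_mem_Wdeg _ _

lemma mOS_mem : mOS n ∈ Wdeg n 1 :=
  sum_mem fun p _ => eOS_mem_Wdeg _ _

lemma cOS_mem : cOS n ∈ Wdeg n 2 :=
  sum_mem fun p _ =>
    add_mem (eOS_mul_eOS_mem_Wdeg _ _ _ _) (eOS_mul_eOS_mem_Wdeg _ _ _ _)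

lemma gOS_mem : gOS n ∈ Wdeg n 2 := by
  have h1 : aOS n * mOS n ∈ Wdeg n (1 + 1) := mul_mem_Wdeg aOS_mem mOS_mem
  norm_num at h1
  exact sub_mem h1 (nsmul_mem cOS_mem _)

lemma gOS_pow_mem (k : ℕ) (hk : 1 ≤ k) : gOS n ^ k ∈ Wdeg n (2 * k) := by
  induction k with
  | zero => omega
  | succ k ih =>
    rcases Nat.eq_zero_or_pos k with rfl | hkpos
    · simpa using gOS_mem
    · have : 2 * (k + 1) = 2 * k + 2 := by ring
      rw [this, pow_succ]
      exact mul_mem_Wdeg (ih hkpos) gOS_mem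

lemma Wdeg_top_eq_zero {x : OS n} (hx : x ∈ Wdeg n (n + 1)) : x = 0 := by
  have : Wdeg n (n + 1) ≤ ⊥ := by
    refine Submodule.span_le.mpr ?_
    rintro z ⟨L, hL, rfl⟩
    simp only [SetLike.mem_coe, Submodule.mem_bot]
    exact eprod_eq_zero _ L le_rfl hL
  simpa using this hx

/-- The linear functional taking each basis generator to 1. -/
def dualOne (n : ℕ) : Module.Dual ℚ (OSidx n →₀ ℚ) :=
  Finsupp.lsum ℚ (fun _ => LinearMap.id)

/-- The contraction (boundary) operator on the ambient exterior algebra. -/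
def Dop (n : ℕ) : OSamb n →ₗ[ℚ] OSamb n :=
  CliffordAlgebra.contractLeft (dualOne n)

lemma dualOne_single (s : OSidx n) : dualOne n (Finsupp.single s 1) = 1 := by
  simp [dualOne]

lemma Dop_eAmb (i j : Fin (n+1)) (h : i ≠ j) : Dop n (eAmb n i j h) = 1 := by
  unfold Dop eAmb
  rw [CliffordAlgebra.contractLeft_ι, dualOne_single, map_one]

lemma involute_eAmb (i j : Fin (n+1)) (h : i ≠ j) :
    CliffordAlgebra.involute (eAmb n i j h) = -eAmb n i j h := by
  unfold eAmb
  rw [CliffordAlgebra.involute_ι]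

lemma Dop_ι_mul (v : OSidx n →₀ ℚ) (x : OSamb n) :
    Dop n (ExteriorAlgebra.ι ℚ v * x) = dualOne n v • x - ExteriorAlgebra.ι ℚ v * Dop n x := by
  unfold Dop
  exact CliffordAlgebra.contractLeft_ι_mul _ _ _

/-- `Dop` is an (odd) derivation. -/
lemma Dop_mul (x y : OSamb n) :
    Dop n (x * y) = Dop n x * y + CliffordAlgebra.involute x * Dop n y := by
  unfold Dop
  induction x using CliffordAlgebra.induction generalizing y with
  | algebraMap r =>
    rw [CliffordAlgebra.contractLeft_algebraMap_mul,
      CliffordAlgebra.contractLeft_algebraMap, AlgHom.commutes, zero_mul, zero_add]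
  | ι v =>
    rw [CliffordAlgebra.contractLeft_ι_mul, CliffordAlgebra.involute_ι,
      CliffordAlgebra.contractLeft_ι, Algebra.smul_def, neg_mul, sub_eq_add_neg]
  | mul x1 x2 ih1 ih2 =>
    rw [mul_assoc, ih1, ih2, ih1 x2, map_mul]
    noncomm_ring
  | add x1 x2 ih1 ih2 =>
    simp only [add_mul, map_add, ih1, ih2]
    abel

lemma Dop_rel_eq_zero {x y : OSamb n} (h : OSRel n x y) : Dop n x = Dop n y := by
  cases h with
  | rel i j k hij hjk hik =>
    simp only [map_zero, map_add, map_sub, Dop_mul, Dop_eAmb, involute_eAmb, one_mul, mul_one,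
      neg_mul]
    abel

lemma involute_rel_eq (x y : OSamb n) (h : OSRel n x y) :
    CliffordAlgebra.involute x = x ∧ CliffordAlgebra.involute y = y := by
  cases h with
  | rel i j k hij hjk hik =>
    constructor
    · rw [map_add, map_sub, map_mul, map_mul, map_mul]
      rw [involute_eAmb, involute_eAmb, involute_eAmb]
      simp only [neg_mul_neg]
    · exact map_zero _

/-- Propagation: if two elements have the same image in `OS n`, then so do their images
under the boundary operator (and the grade involution). -/
lemma mk_Dop_propagate {x y : OSamb n} (h : mkOS n x = mkOS n y) :
    mkOS n (Dop n x) = mkOS n (Dop n y) := by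
  have hquot : Quot.mk (RingQuot.Rel (OSRel n)) x = Quot.mk (RingQuot.Rel (OSRel n)) y := by
    have hx : ∀ z : OSamb n, mkOS n z = ⟨Quot.mk _ z⟩ := by
      intro z
      have h1 : (mkOS n) z = RingQuot.mkRingHom (OSRel n) z := by
        have hc := RingQuot.mkAlgHom_coe ℚ (OSRel n)
        exact congrFun (congrArg (fun f : OSamb n →+* OS n => (f : OSamb n → OS n)) hc) z
      rw [h1, RingQuot.mkRingHom_def]
      rfl
    have := h
    rw [hx x, hx y] at this
    exact congrArg RingQuot.toQuot this
  have key : ∀ a b : OSamb n, Relation.EqvGen (RingQuot.Rel (OSRel n)) a b →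
      mkOS n (Dop n a) = mkOS n (Dop n b) ∧
      mkOS n (CliffordAlgebra.involute a) = mkOS n (CliffordAlgebra.involute b) ∧
      mkOS n a = mkOS n b := by
    intro a b hab
    induction hab with
    | rel a b hr =>
      clear hquot h
      induction hr with
      | of h0 =>
        refine ⟨?_, ?_, ?_⟩
        · rw [Dop_rel_eq_zero h0]
        · obtain ⟨h1, h2⟩ := involute_rel_eq _ _ h0
          rw [h1, h2]
          cases h0 with
          | rel i j k hij hjk hik =>
            exact RingQuot.mkAlgHom_rel ℚ (OSRel.rel i j k hij hjk hik)
        · cases h0 with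
          | rel i j k hij hjk hik =>
            exact RingQuot.mkAlgHom_rel ℚ (OSRel.rel i j k hij hjk hik)
      | add_left h0 ih =>
        obtain ⟨ih1, ih2, ih3⟩ := ih
        exact ⟨by simp only [map_add, ih1], by simp only [map_add, ih2],
          by simp only [map_add, ih3]⟩
      | mul_left h0 ih =>
        obtain ⟨ih1, ih2, ih3⟩ := ih
        refine ⟨?_, ?_, ?_⟩
        · simp only [Dop_mul, map_add, map_mul, ih1, ih2]
        · simp only [map_mul, ih2]
        · simp only [map_mul, ih3]
      | mul_right h0 ih =>
        obtain ⟨ih1, ih2, ih3⟩ := ih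
        refine ⟨?_, ?_, ?_⟩
        · simp only [Dop_mul, map_add, map_mul, ih1, ih3]
        · simp only [map_mul, ih2]
        · simp only [map_mul, ih3]
    | refl a => exact ⟨rfl, rfl, rfl⟩
    | symm a b _ ih => exact ⟨ih.1.symm, ih.2.1.symm, ih.2.2.symm⟩
    | trans a b c _ _ ih1 ih2 =>
      exact ⟨ih1.1.trans ih2.1, ih1.2.1.trans ih2.2.1, ih1.2.2.trans ih2.2.2⟩
  exact (key x y (Quot.eqvGen_exact hquot)).1


/-! ### ambient versions of the distinguished elements -/

def eA (n : ℕ) (i j : Fin (n+1)) : OSamb n :=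
  if h : i = j then 0 else eAmb n i j h

lemma mk_eA (i j : Fin (n+1)) : mkOS n (eA n i j) = eOS n i j := by
  unfold eA eOS
  split <;> simp

lemma Dop_eA {i j : Fin (n+1)} (h : i ≠ j) : Dop n (eA n i j) = 1 := by
  rw [eA, dif_neg h, Dop_eAmb _ _ h]

lemma involute_eA (i j : Fin (n+1)) :
    CliffordAlgebra.involute (eA n i j) = -(eA n i j) := by
  unfold eA
  split
  · simp
  · rw [involute_eAmb]

def aAmb (n : ℕ) : OSamb n :=
  ∑ p ∈ Finset.univ.filter (fun p : Fin n × Fin n => p.1 < p.2),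
    eA n p.1.castSucc p.2.castSucc

def mAmb (n : ℕ) : OSamb n := ∑ i : Fin n, eA n i.castSucc (Fin.last n)

def cAmb (n : ℕ) : OSamb n :=
  ∑ p ∈ Finset.univ.filter (fun p : Fin n × Fin n => p.1 < p.2),
    (eA n p.1.castSucc p.2.castSucc * eA n p.1.castSucc (Fin.last n)
      + eA n p.1.castSucc p.2.castSucc * eA n p.2.castSucc (Fin.last n))

def gAmb (n : ℕ) : OSamb n := aAmb n * mAmb n - ((n+1)/2 : ℕ) • cAmb n

lemma mk_aAmb : mkOS n (aAmb n) = aOS n := by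
  unfold aAmb aOS
  rw [map_sum]
  exact Finset.sum_congr rfl fun p _ => mk_eA _ _

lemma mk_mAmb : mkOS n (mAmb n) = mOS n := by
  unfold mAmb mOS
  rw [map_sum]
  exact Finset.sum_congr rfl fun p _ => mk_eA _ _

lemma mk_cAmb : mkOS n (cAmb n) = cOS n := by
  unfold cAmb cOS
  rw [map_sum]
  refine Finset.sum_congr rfl fun p _ => ?_
  simp only [map_add, map_mul, mk_eA]

lemma mk_gAmb : mkOS n (gAmb n) = gOS n := by
  unfold gAmb gOS
  rw [map_sub, map_mul, map_nsmul, mk_aAmb, mk_mAmb, mk_cAmb]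

/-! ### counting lemmas -/

lemma pair_sum {M : Type*} [AddCommMonoid M] (F : Fin n → M) :
    ∑ p ∈ Finset.univ.filter (fun p : Fin n × Fin n => p.1 < p.2), (F p.1 + F p.2)
      = (n - 1) • ∑ i, F i := by
  rw [Finset.sum_add_distrib]
  have hA : ∑ p ∈ Finset.univ.filter (fun p : Fin n × Fin n => p.1 < p.2), F p.1
      = ∑ i : Fin n, (Finset.univ.filter (fun j : Fin n => i < j)).card • F i := by
    rw [Finset.sum_filter, Fintype.sum_prod_type]
    refine Finset.sum_congr rfl fun i _ => ?_
    show (∑ a : Fin n, if i < a then F i else 0) = _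
    rw [← Finset.sum_filter]
    exact Finset.sum_const _
  have hB : ∑ p ∈ Finset.univ.filter (fun p : Fin n × Fin n => p.1 < p.2), F p.2
      = ∑ i : Fin n, (Finset.univ.filter (fun j : Fin n => j < i)).card • F i := by
    rw [Finset.sum_filter, Fintype.sum_prod_type, Finset.sum_comm]
    refine Finset.sum_congr rfl fun i _ => ?_
    show (∑ a : Fin n, if a < i then F i else 0) = _
    rw [← Finset.sum_filter]
    exact Finset.sum_const _
  rw [hA, hB, ← Finset.sum_add_distrib, Finset.smul_sum]
  refine Finset.sum_congr rfl fun i _ => ?_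
  rw [← add_smul]
  congr 1
  have hdisj : Disjoint (Finset.univ.filter (fun j : Fin n => i < j))
      (Finset.univ.filter (fun j : Fin n => j < i)) := by
    rw [Finset.disjoint_left]
    intro j hj1 hj2
    rw [Finset.mem_filter] at hj1 hj2
    exact lt_asymm hj1.2 hj2.2
  have hunion : (Finset.univ.filter (fun j : Fin n => i < j))
      ∪ (Finset.univ.filter (fun j : Fin n => j < i))
      = Finset.univ.filter (fun j : Fin n => j ≠ i) := by
    ext j
    simp only [Finset.mem_union, Finset.mem_filter, Finset.mem_univ, true_and]
    rw [ne_iff_lt_or_gt]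
    tauto
  have := Finset.card_union_of_disjoint hdisj
  rw [hunion] at this
  rw [← this]
  rw [Finset.filter_ne', Finset.card_erase_of_mem (Finset.mem_univ i)]
  rw [Finset.card_univ, Fintype.card_fin]

lemma card_pairs_even (p : ℕ) (hev : n = 2 * p) :
    (Finset.univ.filter (fun q : Fin n × Fin n => q.1 < q.2)).card = p * (n - 1) := by
  have hswap : (Finset.univ.filter (fun q : Fin n × Fin n => q.1 < q.2)).card
      = (Finset.univ.filter (fun q : Fin n × Fin n => q.2 < q.1)).card := by
    refine Finset.card_bij' (fun q _ => q.swap) (fun q _ => q.swap) ?_ ?_ ?_ ?_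
    · intro q hq
      rw [Finset.mem_filter] at hq ⊢
      exact ⟨Finset.mem_univ _, hq.2⟩
    · intro q hq
      rw [Finset.mem_filter] at hq ⊢
      exact ⟨Finset.mem_univ _, hq.2⟩
    · intro q _; rfl
    · intro q _; rfl
  have hdisj : Disjoint (Finset.univ.filter (fun q : Fin n × Fin n => q.1 < q.2))
      (Finset.univ.filter (fun q : Fin n × Fin n => q.2 < q.1)) := by
    rw [Finset.disjoint_left]
    intro q hq1 hq2
    rw [Finset.mem_filter] at hq1 hq2
    exact lt_asymm hq1.2 hq2.2
  have hunion : (Finset.univ.filter (fun q : Fin n × Fin n => q.1 < q.2))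
      ∪ (Finset.univ.filter (fun q : Fin n × Fin n => q.2 < q.1))
      = Finset.univ.filter (fun q : Fin n × Fin n => ¬ q.1 = q.2) := by
    ext q
    constructor
    · intro hq
      simp only [Finset.mem_union, Finset.mem_filter, Finset.mem_univ, true_and] at hq ⊢
      rcases hq with h | h
      · exact ne_of_lt h
      · exact (ne_of_lt h).symm
    · intro hq
      simp only [Finset.mem_filter, Finset.mem_univ, true_and] at hq
      simp only [Finset.mem_union, Finset.mem_filter, Finset.mem_univ, true_and]
      exact lt_or_gt_of_ne hq
  have hcard_ne : (Finset.univ.filter (fun q : Fin n × Fin n => ¬ q.1 = q.2)).card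
      = n * n - n := by
    have h1 := Finset.card_filter_add_card_filter_not
      (s := (Finset.univ : Finset (Fin n × Fin n))) (p := fun q => q.1 = q.2)
    have h2 : (Finset.univ.filter (fun q : Fin n × Fin n => q.1 = q.2)).card = n := by
      have : Finset.univ.filter (fun q : Fin n × Fin n => q.1 = q.2)
          = (Finset.univ : Finset (Fin n)).image (fun i => (i, i)) := by
        ext q
        simp only [Finset.mem_filter, Finset.mem_univ, true_and, Finset.mem_image]
        constructor
        · intro h
          exact ⟨q.1, by rw [Prod.ext_iff]; exact ⟨rfl, h⟩⟩
        · rintro ⟨i, rfl⟩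
          rfl
      rw [this, Finset.card_image_of_injective _ (fun a b hab => (Prod.ext_iff.mp hab).1),
        Finset.card_univ, Fintype.card_fin]
    have h3 : (Finset.univ : Finset (Fin n × Fin n)).card = n * n := by
      rw [Finset.card_univ, Fintype.card_prod, Fintype.card_fin]
    omega
  have hsum := Finset.card_union_of_disjoint hdisj
  rw [hunion, hcard_ne] at hsum
  have hnn : n * n - n = n * (n - 1) := by
    rcases n with _ | m
    · rfl
    · rw [Nat.succ_sub_one, Nat.mul_succ, Nat.add_sub_cancel]
  set m := p * (n - 1) with hm
  have h2 : 2 * (Finset.univ.filter (fun q : Fin n × Fin n => q.1 < q.2)).card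
      = 2 * m := by
    calc 2 * (Finset.univ.filter (fun q : Fin n × Fin n => q.1 < q.2)).card
        = (Finset.univ.filter (fun q : Fin n × Fin n => q.1 < q.2)).card
          + (Finset.univ.filter (fun q : Fin n × Fin n => q.2 < q.1)).card := by
          rw [two_mul, hswap]
      _ = n * n - n := hsum.symm
      _ = n * (n - 1) := hnn
      _ = 2 * m := by rw [hm, hev]; ring
  omega

/-! ### the boundary of `g` -/

lemma castSucc_ne_of_lt {i j : Fin n} (h : i < j) : i.castSucc ≠ j.castSucc :=
  (Fin.castSucc_injective n).ne (ne_of_lt h)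

lemma Dop_aAmb : Dop n (aAmb n)
    = (Finset.univ.filter (fun p : Fin n × Fin n => p.1 < p.2)).card • (1 : OSamb n) := by
  unfold aAmb
  rw [map_sum]
  have h1 : ∀ p ∈ Finset.univ.filter (fun p : Fin n × Fin n => p.1 < p.2),
      Dop n (eA n p.1.castSucc p.2.castSucc) = 1 := fun p hp =>
    Dop_eA (castSucc_ne_of_lt (Finset.mem_filter.mp hp).2)
  rw [Finset.sum_congr rfl h1, Finset.sum_const]

lemma Dop_mAmb : Dop n (mAmb n) = n • (1 : OSamb n) := by
  unfold mAmb
  rw [map_sum]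
  have h1 : ∀ i ∈ (Finset.univ : Finset (Fin n)),
      Dop n (eA n i.castSucc (Fin.last n)) = 1 := fun i _ =>
    Dop_eA (Fin.castSucc_lt_last i).ne
  rw [Finset.sum_congr rfl h1, Finset.sum_const, Finset.card_univ, Fintype.card_fin]

lemma involute_aAmb : CliffordAlgebra.involute (aAmb n) = -aAmb n := by
  unfold aAmb
  rw [map_sum, ← Finset.sum_neg_distrib]
  exact Finset.sum_congr rfl fun p _ => involute_eA _ _

lemma Dop_cAmb : Dop n (cAmb n)
    = (n - 1) • mAmb n - 2 • aAmb n := by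
  unfold cAmb
  rw [map_sum]
  have hterm : ∀ p ∈ Finset.univ.filter (fun p : Fin n × Fin n => p.1 < p.2),
      Dop n (eA n p.1.castSucc p.2.castSucc * eA n p.1.castSucc (Fin.last n)
        + eA n p.1.castSucc p.2.castSucc * eA n p.2.castSucc (Fin.last n))
      = (eA n p.1.castSucc (Fin.last n) + eA n p.2.castSucc (Fin.last n))
        - (eA n p.1.castSucc p.2.castSucc + eA n p.1.castSucc p.2.castSucc) := by
    intro p hp
    have hne : p.1.castSucc ≠ p.2.castSucc :=
      castSucc_ne_of_lt (Finset.mem_filter.mp hp).2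
    rw [map_add, Dop_mul, Dop_mul, Dop_eA hne,
      Dop_eA (Fin.castSucc_lt_last p.1).ne, Dop_eA (Fin.castSucc_lt_last p.2).ne, involute_eA]
    simp only [one_mul, mul_one, neg_mul]
    abel
  rw [Finset.sum_congr rfl hterm, Finset.sum_sub_distrib]
  rw [pair_sum (fun i => eA n i.castSucc (Fin.last n))]
  have : ∑ p ∈ Finset.univ.filter (fun p : Fin n × Fin n => p.1 < p.2),
      (eA n p.1.castSucc p.2.castSucc + eA n p.1.castSucc p.2.castSucc)
      = 2 • aAmb n := by
    rw [two_smul]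
    unfold aAmb
    rw [← Finset.sum_add_distrib]
  rw [this]
  rfl

lemma Dop_gAmb (hev : n = 2 * ((n+1)/2)) : Dop n (gAmb n) = 0 := by
  set p := (n+1)/2 with hp
  unfold gAmb
  rw [map_sub, map_nsmul, Dop_mul, Dop_aAmb, Dop_mAmb, involute_aAmb, Dop_cAmb]
  rw [card_pairs_even p hev]
  rw [smul_mul_assoc, one_mul, neg_mul, mul_smul_comm, mul_one]
  rw [smul_sub, smul_smul, smul_smul]
  have h1 : p * (n - 1) = p * (n - 1) := rfl
  have h2 : p * 2 = n := by omega
  rw [h2]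
  abel

lemma Dop_gAmb_pow (hev : n = 2 * ((n+1)/2)) (k : ℕ) : Dop n (gAmb n ^ k) = 0 := by
  induction k with
  | zero =>
    rw [pow_zero]
    unfold Dop
    exact CliffordAlgebra.contractLeft_one _ _
  | succ k ih =>
    rw [pow_succ, Dop_mul, ih, Dop_gAmb hev, zero_mul, mul_zero, add_zero]

end OSAux

/-- For every integer `n ≥ 2`, `g^p = 0` in `OS_n`, where
`p = ⌊(n+1)/2⌋`. -/
theorem gOS_pow_eq_zero (n : ℕ) (hn : 2 ≤ n) : gOS n ^ ((n+1)/2) = 0 := by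
  set p := (n+1)/2 with hp
  have hp1 : 1 ≤ p := by omega
  rcases Nat.even_or_odd n with he | ho
  · -- even case
    obtain ⟨k, hk⟩ := he
    have hev : n = 2 * p := by omega
    have hlast0 : (Fin.last n) ≠ (0 : Fin (n+1)) := by
      intro h
      have := congrArg Fin.val h
      simp [Fin.val_last] at this
      omega
    set Y : OSamb n := eAmb n (Fin.last n) 0 hlast0 * OSAux.gAmb n ^ p with hY
    have hmkY : OSAux.mkOS n Y = eOS n (Fin.last n) 0 * gOS n ^ p := by
      rw [hY, map_mul, map_pow, OSAux.mk_gAmb, ← OSAux.eOS_eq_mk hlast0]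
    have hmem : eOS n (Fin.last n) 0 * gOS n ^ p ∈ OSAux.Wdeg n (1 + 2 * p) :=
      OSAux.mul_mem_Wdeg (OSAux.eOS_mem_Wdeg _ _) (OSAux.gOS_pow_mem p hp1)
    have h1n : 1 + 2 * p = n + 1 := by omega
    rw [h1n] at hmem
    have hY0 : OSAux.mkOS n Y = 0 := by
      rw [hmkY]
      exact OSAux.Wdeg_top_eq_zero hmem
    have hprop := OSAux.mk_Dop_propagate (x := Y) (y := 0) (by rw [hY0, map_zero])
    rw [map_zero, map_zero] at hprop
    have hDY : OSAux.Dop n Y = OSAux.gAmb n ^ p := by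
      rw [hY]
      unfold eAmb
      rw [OSAux.Dop_ι_mul, OSAux.Dop_gAmb_pow hev, mul_zero, sub_zero,
        OSAux.dualOne_single, one_smul]
    rw [hDY] at hprop
    calc gOS n ^ p = OSAux.mkOS n (OSAux.gAmb n ^ p) := by rw [map_pow, OSAux.mk_gAmb]
    _ = 0 := hprop
  · -- odd case
    obtain ⟨k, hk⟩ := ho
    have h2p : 2 * p = n + 1 := by omega
    have hmem := OSAux.gOS_pow_mem (n := n) p hp1
    rw [h2p] at hmem
    exact OSAux.Wdeg_top_eq_zero hmem

end
end

section
/- For every odd integer n ≥ 3, with p = (n+1)/2, the identity a·g^{p−1} = (p−1)·m·g^{p−1} holds in OS_n. -/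
noncomputable section

-- basics
lemma eOS_diag (n : ℕ) (i : Fin (n+1)) : eOS n i i = 0 := dif_pos rfl

lemma eOS_def (n : ℕ) {i j : Fin (n+1)} (h : i ≠ j) :
    eOS n i j = RingQuot.mkAlgHom ℚ (OSRel n) (eAmb n i j h) := dif_neg h

lemma eAmb_symm (n : ℕ) {i j : Fin (n+1)} (h : i ≠ j) :
    eAmb n i j h = eAmb n j i h.symm := by
  unfold eAmb
  congr 1
  congr 1
  exact Subtype.ext Sym2.eq_swap

lemma eOS_symm (n : ℕ) (i j : Fin (n+1)) : eOS n i j = eOS n j i := by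
  by_cases h : i = j
  · subst h; rfl
  · rw [eOS_def n h, eOS_def n (Ne.symm h), eAmb_symm n h]

lemma eOS_sq (n : ℕ) (i j : Fin (n+1)) : eOS n i j * eOS n i j = 0 := by
  by_cases h : i = j
  · rw [h, eOS_diag, zero_mul]
  · rw [eOS_def n h, ← map_mul]
    unfold eAmb
    rw [ExteriorAlgebra.ι_sq_zero, map_zero]

lemma eOS_anticomm (n : ℕ) (i j k l : Fin (n+1)) :
    eOS n i j * eOS n k l = -(eOS n k l * eOS n i j) := by
  by_cases h : i = j
  · rw [h, eOS_diag, zero_mul, mul_zero, neg_zero]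
  · by_cases h' : k = l
    · rw [h', eOS_diag, zero_mul, mul_zero, neg_zero]
    · rw [eOS_def n h, eOS_def n h', ← map_mul, ← map_mul, eq_neg_iff_add_eq_zero, ← map_add]
      unfold eAmb
      rw [ExteriorAlgebra.ι_add_mul_swap, map_zero]

lemma eOS_rel (n : ℕ) {i j k : Fin (n+1)} (hij : i ≠ j) (hjk : j ≠ k) (hik : i ≠ k) :
    eOS n i k * eOS n j k = eOS n i j * eOS n j k - eOS n i j * eOS n i k := by
  have h := RingQuot.mkAlgHom_rel ℚ (OSRel.rel i j k hij hjk hik)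
  rw [map_zero, map_add, map_sub, map_mul, map_mul, map_mul] at h
  rw [eOS_def n hik, eOS_def n hjk, eOS_def n hij]
  have h2 : (RingQuot.mkAlgHom ℚ (OSRel n)) (eAmb n i k hik) * (RingQuot.mkAlgHom ℚ (OSRel n)) (eAmb n j k hjk)
      + (RingQuot.mkAlgHom ℚ (OSRel n)) (eAmb n i j hij) * (RingQuot.mkAlgHom ℚ (OSRel n)) (eAmb n i k hik)
      = (RingQuot.mkAlgHom ℚ (OSRel n)) (eAmb n i j hij) * (RingQuot.mkAlgHom ℚ (OSRel n)) (eAmb n j k hjk) := by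
    rwa [sub_add_eq_add_sub, sub_eq_zero] at h
  exact eq_sub_of_add_eq h2

section Part2
variable {n : ℕ}

/-- auxiliary: `f i = e_{i,n+1}`. -/
def ffn (n : ℕ) (i : Fin (n+1)) : OS n := eOS n i (Fin.last n)

/-- auxiliary: `x i j = e_{ij}(f_i + f_j)`. -/
def xxn (n : ℕ) (i j : Fin (n+1)) : OS n := eOS n i j * (ffn n i + ffn n j)

lemma xx_symm (n : ℕ) (i j : Fin (n+1)) : xxn n i j = xxn n j i := by
  rw [xxn, xxn, eOS_symm, add_comm]

lemma xx_diag (n : ℕ) (i : Fin (n+1)) : xxn n i i = 0 := by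
  rw [xxn, eOS_diag, zero_mul]

lemma sq_absorb (n : ℕ) (i j : Fin (n+1)) (w : OS n) :
    eOS n i j * (eOS n i j * w) = 0 := by
  rw [← mul_assoc, eOS_sq, zero_mul]

lemma swap3 (n : ℕ) (i j k l : Fin (n+1)) (w : OS n) :
    eOS n i j * (eOS n k l * w) = -(eOS n k l * (eOS n i j * w)) := by
  rw [← mul_assoc, eOS_anticomm, ← mul_assoc, neg_mul]

lemma swap_sq (n : ℕ) (i j k l : Fin (n+1)) (w : OS n) :
    eOS n i j * (eOS n k l * (eOS n i j * w)) = 0 := by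
  rw [swap3 n i j k l (eOS n i j * w), sq_absorb, mul_zero, neg_zero]

lemma tri (n : ℕ) (i j l : Fin (n+1)) :
    eOS n i j * (eOS n i l * eOS n j l) = 0 := by
  by_cases hij : i = j
  · subst hij; rw [eOS_diag, zero_mul]
  by_cases hil : i = l
  · subst hil; rw [eOS_diag, zero_mul, mul_zero]
  by_cases hjl : j = l
  · subst hjl; rw [eOS_diag, mul_zero, mul_zero]
  rw [eOS_rel n hij hjl hil, mul_sub, ← mul_assoc, ← mul_assoc, eOS_sq, zero_mul, zero_mul,
    sub_zero]

lemma tri' (n : ℕ) (i j l : Fin (n+1)) (w : OS n) :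
    eOS n i j * (eOS n i l * (eOS n j l * w)) = 0 := by
  rw [show eOS n i l * (eOS n j l * w) = (eOS n i l * eOS n j l) * w by rw [mul_assoc],
    ← mul_assoc, tri, zero_mul]

/-- Z1 -/
lemma e_mul_xx (n : ℕ) (i j : Fin (n+1)) : eOS n i j * xxn n i j = 0 := by
  rw [xxn, ← mul_assoc, eOS_sq, zero_mul]

lemma e_mul_xx' (n : ℕ) (i j : Fin (n+1)) : eOS n j i * xxn n i j = 0 := by
  rw [eOS_symm, e_mul_xx]

/-- Z2 : `f_k x_{kl} = 0` for `k, l ≠ n+1`. -/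
lemma ff_mul_xx (n : ℕ) {k l : Fin (n+1)} (hk : k ≠ Fin.last n) (hl : l ≠ Fin.last n) :
    ffn n k * xxn n k l = 0 := by
  by_cases hkl : k = l
  · subst hkl; rw [xx_diag, mul_zero]
  simp only [xxn, ffn]
  rw [swap3, mul_add, eOS_sq, zero_add, eOS_rel n hkl hl hk, mul_sub, sq_absorb, sq_absorb,
    sub_self, neg_zero]

/-- Z2 right version : `x_{kl} f_k = 0`. -/
lemma xx_mul_ff (n : ℕ) {k l : Fin (n+1)} (hk : k ≠ Fin.last n) (hl : l ≠ Fin.last n) :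
    xxn n k l * ffn n k = 0 := by
  by_cases hkl : k = l
  · subst hkl; rw [xx_diag, zero_mul]
  simp only [xxn, ffn]
  rw [mul_assoc, add_mul, eOS_sq, zero_add, eOS_rel n (Ne.symm hkl) hk hl, eOS_symm n l k,
    mul_sub, sq_absorb, sq_absorb, sub_self]

end Part2

section Part3
variable {n : ℕ}

lemma xx_sq (n : ℕ) (i j : Fin (n+1)) : xxn n i j * xxn n i j = 0 := by
  simp only [xxn, ffn]
  rw [mul_assoc, add_mul, swap3 n i (Fin.last n) i j, swap3 n j (Fin.last n) i j]
  simp only [mul_add, mul_neg, sq_absorb, neg_zero, add_zero, zero_add, mul_zero]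

/-- Z3' : `x_{ij} x_{il} = 0` -/
lemma xx_mul_xx (n : ℕ) {i j l : Fin (n+1)} (hi : i ≠ Fin.last n) (hj : j ≠ Fin.last n)
    (hl : l ≠ Fin.last n) : xxn n i j * xxn n i l = 0 := by
  by_cases hij : i = j
  · subst hij; rw [xx_diag, zero_mul]
  by_cases hil : i = l
  · subst hil; rw [xx_diag, mul_zero]
  by_cases hjl : j = l
  · subst hjl; exact xx_sq n i j
  have r1 : eOS n i (Fin.last n) * eOS n l (Fin.last n)
      = eOS n i l * eOS n l (Fin.last n) - eOS n i l * eOS n i (Fin.last n) :=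
    eOS_rel n hil hl hi
  have r2 : eOS n j (Fin.last n) * eOS n i (Fin.last n)
      = eOS n i j * eOS n i (Fin.last n) - eOS n i j * eOS n j (Fin.last n) := by
    rw [eOS_rel n (Ne.symm hij) hi hj, eOS_symm n j i]
  have r3 : eOS n j (Fin.last n) * eOS n l (Fin.last n)
      = eOS n j l * eOS n l (Fin.last n) - eOS n j l * eOS n j (Fin.last n) :=
    eOS_rel n hjl hl hj
  have hA : eOS n i (Fin.last n) * (eOS n i (Fin.last n) + eOS n l (Fin.last n))
      = eOS n i l * eOS n l (Fin.last n) - eOS n i l * eOS n i (Fin.last n) := by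
    rw [mul_add, eOS_sq, zero_add, r1]
  have hB : eOS n j (Fin.last n) * (eOS n i (Fin.last n) + eOS n l (Fin.last n))
      = (eOS n i j * eOS n i (Fin.last n) - eOS n i j * eOS n j (Fin.last n))
        + (eOS n j l * eOS n l (Fin.last n) - eOS n j l * eOS n j (Fin.last n)) := by
    rw [mul_add, r2, r3]
  simp only [xxn, ffn]
  rw [mul_assoc, add_mul, swap3 n i (Fin.last n) i l, swap3 n j (Fin.last n) i l, hA, hB]
  simp only [mul_sub, mul_add, mul_neg, neg_neg, sq_absorb, swap_sq, tri', mul_zero, neg_zero,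
    sub_self, add_zero, zero_add, sub_zero, zero_sub, neg_add_rev]


end Part3

section Part4
variable {n : ℕ}

def trm (n : ℕ) (k l u : Fin (n+1)) : OS n :=
  (eOS n k u + eOS n l u) * xxn n k l - ffn n u * xxn n k l

lemma ff_mul_xx' (n : ℕ) {k l : Fin (n+1)} (hk : k ≠ Fin.last n) (hl : l ≠ Fin.last n) :
    ffn n k * xxn n l k = 0 := by rw [xx_symm]; exact ff_mul_xx n hk hl

lemma termEq (n : ℕ) {k l u : Fin (n+1)} (hkl : k ≠ l) (hku : k ≠ u) (hlu : l ≠ u)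
    (hk : k ≠ Fin.last n) (hl : l ≠ Fin.last n) (hu : u ≠ Fin.last n) :
    trm n k l u = -(eOS n k l * (eOS n k u * ffn n l)) - eOS n k l * (eOS n l u * ffn n k)
      - eOS n k l * (eOS n k u * ffn n u) - eOS n k l * (eOS n l u * ffn n u) := by
  have rk : eOS n u (Fin.last n) * eOS n k (Fin.last n)
      = eOS n k u * eOS n k (Fin.last n) - eOS n k u * eOS n u (Fin.last n) := by
    rw [eOS_rel n (Ne.symm hku) hk hu, eOS_symm n u k]
  have rl : eOS n u (Fin.last n) * eOS n l (Fin.last n)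
      = eOS n l u * eOS n l (Fin.last n) - eOS n l u * eOS n u (Fin.last n) := by
    rw [eOS_rel n (Ne.symm hlu) hl hu, eOS_symm n u l]
  simp only [trm, xxn, ffn]
  rw [add_mul, swap3 n k u k l, swap3 n l u k l, swap3 n u (Fin.last n) k l,
    mul_add (eOS n u (Fin.last n)), rk, rl]
  simp only [mul_add, mul_sub, mul_neg, neg_neg]
  abel

lemma trm_cyc (n : ℕ) (k l u : Fin (n+1)) (hk : k ≠ Fin.last n) (hl : l ≠ Fin.last n)
    (hu : u ≠ Fin.last n) : trm n k l u + trm n l u k + trm n u k l = 0 := by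
  by_cases hkl : k = l
  · subst hkl
    have h1 : trm n k k u = 0 := by
      simp [trm, xx_diag]
    have h2 : trm n k u k = 0 := by
      rw [trm, add_mul, e_mul_xx' n k u, ff_mul_xx n hk hu, eOS_diag, zero_mul, zero_add,
        sub_zero]
    have h3 : trm n u k k = 0 := by
      rw [trm, add_mul, e_mul_xx n u k, ff_mul_xx' n hk hu, eOS_diag, zero_mul, add_zero,
        sub_zero]
    rw [h1, h2, h3, add_zero, add_zero]
  by_cases hku : k = u
  · subst hku
    have h1 : trm n k l k = 0 := by
      rw [trm, add_mul, e_mul_xx' n k l, ff_mul_xx n hk hl, eOS_diag, zero_mul, zero_add,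
        sub_zero]
    have h2 : trm n l k k = 0 := by
      rw [trm, add_mul, e_mul_xx n l k, ff_mul_xx' n hk hl, eOS_diag, zero_mul, add_zero,
        sub_zero]
    have h3 : trm n k k l = 0 := by simp [trm, xx_diag]
    rw [h1, h2, h3, add_zero, add_zero]
  by_cases hlu : l = u
  · subst hlu
    have h1 : trm n k l l = 0 := by
      rw [trm, add_mul, e_mul_xx n k l, ff_mul_xx' n hl hk, eOS_diag, zero_mul, add_zero,
        sub_zero]
    have h2 : trm n l l k = 0 := by simp [trm, xx_diag]
    have h3 : trm n l k l = 0 := by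
      rw [trm, add_mul, e_mul_xx' n l k, ff_mul_xx n hl hk, eOS_diag, zero_mul, zero_add,
        sub_zero]
    rw [h1, h2, h3, add_zero, add_zero]
  -- distinct case
  rw [termEq n hkl hku hlu hk hl hu,
    termEq n hlu (Ne.symm hkl) (Ne.symm hku) hl hu hk,
    termEq n (Ne.symm hku) (Ne.symm hlu) hkl hu hk hl,
    eOS_symm n l k, eOS_symm n u k, eOS_symm n u l,
    swap3 n l u k l (ffn n u), swap3 n l u k u (ffn n l), swap3 n l u k l (ffn n k),
    swap3 n l u k u (ffn n k), swap3 n k u k l (ffn n u), swap3 n k u k l (ffn n l)]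
  abel

end Part4

section Part5
variable {n : ℕ}

def AAn (n : ℕ) (S : Finset (Fin (n+1))) : OS n := ∑ i ∈ S, ∑ j ∈ S, eOS n i j
def CCn (n : ℕ) (S : Finset (Fin (n+1))) : OS n := ∑ i ∈ S, ∑ j ∈ S, xxn n i j
def MMn (n : ℕ) (S : Finset (Fin (n+1))) : OS n := ∑ u ∈ S, ffn n u

lemma comm_EE_E (n : ℕ) (a b c d p q : Fin (n+1)) :
    Commute (eOS n a b * eOS n c d) (eOS n p q) := by
  show _ = _
  rw [mul_assoc, eOS_anticomm n c d p q, mul_neg, ← mul_assoc, eOS_anticomm n a b p q,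
    neg_mul, neg_neg, mul_assoc]

lemma comm_xx_E (n : ℕ) (i j p q : Fin (n+1)) : Commute (xxn n i j) (eOS n p q) := by
  have h : xxn n i j = eOS n i j * eOS n i (Fin.last n) + eOS n i j * eOS n j (Fin.last n) := by
    rw [xxn, ffn, ffn, mul_add]
  rw [h]
  exact Commute.add_left (comm_EE_E n i j i (Fin.last n) p q) (comm_EE_E n i j j (Fin.last n) p q)

lemma comm_xx_ff (n : ℕ) (i j u : Fin (n+1)) : Commute (xxn n i j) (ffn n u) :=
  comm_xx_E n i j u (Fin.last n)

lemma comm_xx_xx (n : ℕ) (i j k l : Fin (n+1)) : Commute (xxn n i j) (xxn n k l) := by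
  have h : xxn n k l = eOS n k l * ffn n k + eOS n k l * ffn n l := by rw [xxn, mul_add]
  rw [h]
  exact Commute.add_right ((comm_xx_E n i j k l).mul_right (comm_xx_ff n i j k))
    ((comm_xx_E n i j k l).mul_right (comm_xx_ff n i j l))

lemma comm_xx_CC (n : ℕ) (i j : Fin (n+1)) (S : Finset (Fin (n+1))) :
    Commute (xxn n i j) (CCn n S) :=
  Commute.sum_right _ _ _ fun k _ => Commute.sum_right _ _ _ fun l _ => comm_xx_xx n i j k l

lemma comm_xx_AA (n : ℕ) (i j : Fin (n+1)) (S : Finset (Fin (n+1))) :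
    Commute (xxn n i j) (AAn n S) :=
  Commute.sum_right _ _ _ fun k _ => Commute.sum_right _ _ _ fun l _ => comm_xx_E n i j k l

lemma comm_xx_MM (n : ℕ) (i j : Fin (n+1)) (S : Finset (Fin (n+1))) :
    Commute (xxn n i j) (MMn n S) :=
  Commute.sum_right _ _ _ fun u _ => comm_xx_ff n i j u

/-- sum of an antisymmetric family squares to zero -/
lemma antisym_sum {ι : Type*} (s : Finset ι) (g : ι → OS n)
    (h : ∀ i j, g i * g j = -(g j * g i)) : (∑ i ∈ s, g i) * (∑ j ∈ s, g j) = 0 := by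
  have e1 : (∑ i ∈ s, g i) * (∑ j ∈ s, g j) = ∑ i ∈ s, ∑ j ∈ s, g i * g j := by
    rw [Finset.sum_mul]
    exact Finset.sum_congr rfl fun i _ => Finset.mul_sum _ _ _
  have e2 : (∑ i ∈ s, ∑ j ∈ s, g i * g j) = -(∑ i ∈ s, ∑ j ∈ s, g i * g j) := by
    have h4 : ∑ i ∈ s, ∑ j ∈ s, g i * g j = ∑ i ∈ s, ∑ j ∈ s, (-(g j * g i)) :=
      Finset.sum_congr rfl fun i _ => Finset.sum_congr rfl fun j _ => h i j
    have h5 : ∑ i ∈ s, ∑ j ∈ s, (-(g j * g i)) = -(∑ i ∈ s, ∑ j ∈ s, g j * g i) := by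
      simp only [Finset.sum_neg_distrib]
    have h6 : (∑ i ∈ s, ∑ j ∈ s, g j * g i) = ∑ i ∈ s, ∑ j ∈ s, g i * g j := Finset.sum_comm
    conv_lhs => rw [h4, h5, h6]
  have e3 : (2:ℚ) • (∑ i ∈ s, ∑ j ∈ s, g i * g j) = 0 := by
    rw [two_smul]
    nth_rewrite 2 [e2]
    rw [add_neg_cancel]
  rw [e1]
  have := smul_eq_zero.mp e3
  rcases this with h2 | h2
  · norm_num at h2
  · exact h2

end Part5

section Part6
variable {n : ℕ}

lemma sum_split (S : Finset (Fin (n+1))) {k l : Fin (n+1)} (hk : k ∈ S) (hl : l ∈ S)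
    (hkl : k ≠ l) (h : Fin (n+1) → OS n) :
    ∑ i ∈ S, h i = ∑ i ∈ (S.erase k).erase l, h i + h l + h k := by
  rw [← Finset.sum_erase_add S h hk,
    ← Finset.sum_erase_add (S.erase k) h (Finset.mem_erase.mpr ⟨Ne.symm hkl, hl⟩)]

lemma sum_trm_zero (S : Finset (Fin (n+1))) (hS : Fin.last n ∉ S) :
    ∑ k ∈ S, ∑ l ∈ S, ∑ u ∈ S, trm n k l u = 0 := by
  have hne : ∀ i ∈ S, i ≠ Fin.last n := fun i hi hh => hS (hh ▸ hi)
  have hT2 : (∑ k ∈ S, ∑ l ∈ S, ∑ u ∈ S, trm n l u k)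
      = ∑ k ∈ S, ∑ l ∈ S, ∑ u ∈ S, trm n k l u := by
    rw [Finset.sum_comm]
    exact Finset.sum_congr rfl fun l _ => Finset.sum_comm
  have hT3 : (∑ k ∈ S, ∑ l ∈ S, ∑ u ∈ S, trm n u k l)
      = ∑ k ∈ S, ∑ l ∈ S, ∑ u ∈ S, trm n k l u := by
    refine Eq.trans (Finset.sum_congr rfl fun k _ => Finset.sum_comm) ?_
    exact Finset.sum_comm
  have z : ∑ k ∈ S, ∑ l ∈ S, ∑ u ∈ S, (trm n k l u + trm n l u k + trm n u k l) = 0 :=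
    Finset.sum_eq_zero fun k hk => Finset.sum_eq_zero fun l hl => Finset.sum_eq_zero fun u hu =>
      trm_cyc n k l u (hne k hk) (hne l hl) (hne u hu)
  have e : ∑ k ∈ S, ∑ l ∈ S, ∑ u ∈ S, (trm n k l u + trm n l u k + trm n u k l)
      = (∑ k ∈ S, ∑ l ∈ S, ∑ u ∈ S, trm n k l u) + (∑ k ∈ S, ∑ l ∈ S, ∑ u ∈ S, trm n k l u)
        + (∑ k ∈ S, ∑ l ∈ S, ∑ u ∈ S, trm n k l u) := by
    simp only [Finset.sum_add_distrib]
    rw [hT2, hT3]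
  have key : (3:ℚ) • (∑ k ∈ S, ∑ l ∈ S, ∑ u ∈ S, trm n k l u) = 0 := by
    rw [show (3:ℚ) = 1 + 1 + 1 by norm_num, add_smul, add_smul, one_smul, ← e, z]
  rcases smul_eq_zero.mp key with h2 | h2
  · norm_num at h2
  · exact h2

/-- S2 : the summed triple identity. -/
lemma sum_EE_xx (S : Finset (Fin (n+1))) (hS : Fin.last n ∉ S) :
    ∑ k ∈ S, ∑ l ∈ S, ((∑ u ∈ S, (eOS n k u + eOS n l u)) * xxn n k l)
      = MMn n S * CCn n S := by
  have h0 := sum_trm_zero S hS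
  simp only [trm, Finset.sum_sub_distrib, sub_eq_zero] at h0
  calc ∑ k ∈ S, ∑ l ∈ S, ((∑ u ∈ S, (eOS n k u + eOS n l u)) * xxn n k l)
      = ∑ k ∈ S, ∑ l ∈ S, ∑ u ∈ S, ((eOS n k u + eOS n l u) * xxn n k l) := by
        simp only [Finset.sum_mul]
    _ = ∑ k ∈ S, ∑ l ∈ S, ∑ u ∈ S, (ffn n u * xxn n k l) := h0
    _ = ∑ k ∈ S, ∑ l ∈ S, (MMn n S * xxn n k l) := by
        refine Finset.sum_congr rfl fun k _ => Finset.sum_congr rfl fun l _ => ?_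
        rw [MMn, Finset.sum_mul]
    _ = MMn n S * CCn n S := by
        rw [CCn, Finset.mul_sum]
        exact Finset.sum_congr rfl fun k _ => (Finset.mul_sum _ _ _).symm

/-- S1 : splitting `A_S x_{kl}`. -/
lemma AA_mul_xx (S : Finset (Fin (n+1))) {k l : Fin (n+1)} (hk : k ∈ S) (hl : l ∈ S)
    (hkl : k ≠ l) :
    AAn n S * xxn n k l = AAn n ((S.erase k).erase l) * xxn n k l
      + ((∑ u ∈ S, (eOS n k u + eOS n l u)) * xxn n k l
        + (∑ u ∈ S, (eOS n k u + eOS n l u)) * xxn n k l) := by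
  have hA : AAn n S = AAn n ((S.erase k).erase l)
      + ((∑ u ∈ (S.erase k).erase l, eOS n u l) + (∑ u ∈ (S.erase k).erase l, eOS n u k)
        + ((∑ u ∈ (S.erase k).erase l, eOS n l u) + (∑ u ∈ (S.erase k).erase l, eOS n k u))
        + (eOS n l l + eOS n l k + (eOS n k l + eOS n k k))) := by
    rw [AAn]
    calc ∑ i ∈ S, ∑ j ∈ S, eOS n i j
        = ∑ i ∈ S, (∑ j ∈ (S.erase k).erase l, eOS n i j + eOS n i l + eOS n i k) :=
          Finset.sum_congr rfl fun i _ => sum_split S hk hl hkl _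
      _ = (∑ i ∈ S, ∑ j ∈ (S.erase k).erase l, eOS n i j) + (∑ i ∈ S, eOS n i l)
          + (∑ i ∈ S, eOS n i k) := by simp only [Finset.sum_add_distrib]
      _ = ((∑ i ∈ (S.erase k).erase l, ∑ j ∈ (S.erase k).erase l, eOS n i j)
            + (∑ j ∈ (S.erase k).erase l, eOS n l j) + (∑ j ∈ (S.erase k).erase l, eOS n k j))
          + ((∑ i ∈ (S.erase k).erase l, eOS n i l) + eOS n l l + eOS n k l)
          + ((∑ i ∈ (S.erase k).erase l, eOS n i k) + eOS n l k + eOS n k k) := by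
          rw [sum_split S hk hl hkl (fun i => ∑ j ∈ (S.erase k).erase l, eOS n i j),
            sum_split S hk hl hkl (fun i => eOS n i l), sum_split S hk hl hkl (fun i => eOS n i k)]
      _ = _ := by rw [AAn]; abel
  rw [hA, add_mul]
  congr 1
  -- residue * x = 2 • (target * x)
  have hsymm : ∀ T : Finset (Fin (n+1)), (∑ u ∈ T, eOS n u l) = ∑ u ∈ T, eOS n l u :=
    fun T => Finset.sum_congr rfl fun u _ => eOS_symm n u l
  have hsymm' : ∀ T : Finset (Fin (n+1)), (∑ u ∈ T, eOS n u k) = ∑ u ∈ T, eOS n k u :=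
    fun T => Finset.sum_congr rfl fun u _ => eOS_symm n u k
  have hedge : (eOS n l l + eOS n l k + (eOS n k l + eOS n k k)) * xxn n k l = 0 := by
    simp [add_mul, eOS_diag, e_mul_xx, e_mul_xx']
  have hext : (∑ u ∈ S, (eOS n k u + eOS n l u)) * xxn n k l
      = ((∑ u ∈ (S.erase k).erase l, eOS n k u) + (∑ u ∈ (S.erase k).erase l, eOS n l u))
        * xxn n k l := by
    rw [sum_split S hk hl hkl (fun u => eOS n k u + eOS n l u), Finset.sum_add_distrib]
    simp [add_mul, eOS_diag, e_mul_xx, e_mul_xx']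
  rw [hext, hsymm, hsymm']
  simp only [add_mul, eOS_diag, zero_mul, e_mul_xx, e_mul_xx', add_zero, zero_add]
  abel

end Part6

section Part7
variable {n : ℕ}

lemma xx_mul_CC (S : Finset (Fin (n+1))) (hS : Fin.last n ∉ S) {k l : Fin (n+1)}
    (hk : k ∈ S) (hl : l ∈ S) (hkl : k ≠ l) :
    xxn n k l * CCn n S = xxn n k l * CCn n ((S.erase k).erase l) := by
  have hne : ∀ i ∈ S, i ≠ Fin.last n := fun i hi hh => hS (hh ▸ hi)
  have hsub : ∀ i ∈ (S.erase k).erase l, i ∈ S := fun i hi =>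
    Finset.mem_of_mem_erase (Finset.mem_of_mem_erase hi)
  have hC : CCn n S = CCn n ((S.erase k).erase l)
      + ((∑ u ∈ (S.erase k).erase l, xxn n u l) + (∑ u ∈ (S.erase k).erase l, xxn n u k)
        + ((∑ u ∈ (S.erase k).erase l, xxn n l u) + (∑ u ∈ (S.erase k).erase l, xxn n k u))
        + (xxn n l l + xxn n l k + (xxn n k l + xxn n k k))) := by
    rw [CCn]
    calc ∑ i ∈ S, ∑ j ∈ S, xxn n i j
        = ∑ i ∈ S, (∑ j ∈ (S.erase k).erase l, xxn n i j + xxn n i l + xxn n i k) :=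
          Finset.sum_congr rfl fun i _ => sum_split S hk hl hkl _
      _ = (∑ i ∈ S, ∑ j ∈ (S.erase k).erase l, xxn n i j) + (∑ i ∈ S, xxn n i l)
          + (∑ i ∈ S, xxn n i k) := by simp only [Finset.sum_add_distrib]
      _ = ((∑ i ∈ (S.erase k).erase l, ∑ j ∈ (S.erase k).erase l, xxn n i j)
            + (∑ j ∈ (S.erase k).erase l, xxn n l j) + (∑ j ∈ (S.erase k).erase l, xxn n k j))
          + ((∑ i ∈ (S.erase k).erase l, xxn n i l) + xxn n l l + xxn n k l)
          + ((∑ i ∈ (S.erase k).erase l, xxn n i k) + xxn n l k + xxn n k k) := by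
          rw [sum_split S hk hl hkl (fun i => ∑ j ∈ (S.erase k).erase l, xxn n i j),
            sum_split S hk hl hkl (fun i => xxn n i l), sum_split S hk hl hkl (fun i => xxn n i k)]
      _ = _ := by rw [CCn]; abel
  have hz1 : xxn n k l * (∑ u ∈ (S.erase k).erase l, xxn n u l) = 0 := by
    rw [Finset.mul_sum]
    refine Finset.sum_eq_zero fun u hu => ?_
    rw [xx_symm n u l, xx_symm n k l]
    exact xx_mul_xx n (hne l hl) (hne k hk) (hne u (hsub u hu))
  have hz2 : xxn n k l * (∑ u ∈ (S.erase k).erase l, xxn n u k) = 0 := by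
    rw [Finset.mul_sum]
    refine Finset.sum_eq_zero fun u hu => ?_
    rw [xx_symm n u k]
    exact xx_mul_xx n (hne k hk) (hne l hl) (hne u (hsub u hu))
  have hz3 : xxn n k l * (∑ u ∈ (S.erase k).erase l, xxn n l u) = 0 := by
    rw [Finset.mul_sum]
    refine Finset.sum_eq_zero fun u hu => ?_
    rw [xx_symm n k l]
    exact xx_mul_xx n (hne l hl) (hne k hk) (hne u (hsub u hu))
  have hz4 : xxn n k l * (∑ u ∈ (S.erase k).erase l, xxn n k u) = 0 := by
    rw [Finset.mul_sum]
    refine Finset.sum_eq_zero fun u hu => ?_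
    exact xx_mul_xx n (hne k hk) (hne l hl) (hne u (hsub u hu))
  have hz5 : xxn n k l * xxn n l k = 0 := by
    rw [xx_symm n l k]; exact xx_mul_xx n (hne k hk) (hne l hl) (hne l hl)
  have hz6 : xxn n k l * xxn n k l = xxn n k l * xxn n k l := rfl
  rw [hC]
  simp only [mul_add, hz1, hz2, hz3, hz4, hz5, xx_diag, mul_zero, add_zero, zero_add,
    xx_sq]

lemma xx_mul_CC_pow (S : Finset (Fin (n+1))) (hS : Fin.last n ∉ S) {k l : Fin (n+1)}
    (hk : k ∈ S) (hl : l ∈ S) (hkl : k ≠ l) (j : ℕ) :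
    xxn n k l * CCn n S ^ j = xxn n k l * CCn n ((S.erase k).erase l) ^ j := by
  induction j with
  | zero => rw [pow_zero, pow_zero]
  | succ j IH =>
    rw [pow_succ', pow_succ', ← mul_assoc, xx_mul_CC S hS hk hl hkl,
      (comm_xx_CC n k l ((S.erase k).erase l)).eq]
    simp only [mul_assoc]
    rw [IH, ← mul_assoc, ← (comm_xx_CC n k l ((S.erase k).erase l)).eq, mul_assoc]

lemma xx_MM' (S : Finset (Fin (n+1))) (hS : Fin.last n ∉ S) {k l : Fin (n+1)}
    (hk : k ∈ S) (hl : l ∈ S) (hkl : k ≠ l) :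
    xxn n k l * MMn n ((S.erase k).erase l) = MMn n S * xxn n k l := by
  have hne : ∀ i ∈ S, i ≠ Fin.last n := fun i hi hh => hS (hh ▸ hi)
  have hM : MMn n S = MMn n ((S.erase k).erase l) + ffn n l + ffn n k :=
    sum_split S hk hl hkl _
  have h1 : ffn n l * xxn n k l = 0 := by
    rw [xx_symm n k l]; exact ff_mul_xx n (hne l hl) (hne k hk)
  have h2 : ffn n k * xxn n k l = 0 := ff_mul_xx n (hne k hk) (hne l hl)
  rw [hM, add_mul, add_mul, h1, h2, add_zero, add_zero,
    ← (comm_xx_MM n k l ((S.erase k).erase l)).eq]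

theorem core (q : ℕ) : ∀ (S : Finset (Fin (n+1))), Fin.last n ∉ S → S.card = 2*q+1 →
    AAn n S * CCn n S ^ q = ((2*q : ℕ) : ℚ) • (MMn n S * CCn n S ^ q) := by
  induction q with
  | zero =>
    intro S hS hcard
    obtain ⟨v, rfl⟩ := Finset.card_eq_one.mp (by simpa using hcard)
    simp [AAn, eOS_diag]
  | succ q IH =>
    intro S hS hcard
    have point : ∀ k ∈ S, ∀ l ∈ S,
        (AAn n S * xxn n k l) * CCn n S ^ q
        = ((2*q : ℕ) : ℚ) • (MMn n S * (xxn n k l * CCn n S ^ q))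
          + (((∑ u ∈ S, (eOS n k u + eOS n l u)) * xxn n k l) * CCn n S ^ q
            + ((∑ u ∈ S, (eOS n k u + eOS n l u)) * xxn n k l) * CCn n S ^ q) := by
      intro k hk l hl
      by_cases hkl : k = l
      · subst hkl; simp [xx_diag]
      · have hk' : l ∈ S.erase k := Finset.mem_erase.mpr ⟨Ne.symm hkl, hl⟩
        have hS' : Fin.last n ∉ (S.erase k).erase l := fun hmem =>
          hS (Finset.mem_of_mem_erase (Finset.mem_of_mem_erase hmem))
        have hcard' : ((S.erase k).erase l).card = 2*q+1 := by
          rw [Finset.card_erase_of_mem hk', Finset.card_erase_of_mem hk, hcard]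
          omega
        have IH' := IH ((S.erase k).erase l) hS' hcard'
        rw [AA_mul_xx S hk hl hkl, add_mul, add_mul]
        congr 1
        calc (AAn n ((S.erase k).erase l) * xxn n k l) * CCn n S ^ q
            = AAn n ((S.erase k).erase l) * (xxn n k l * CCn n S ^ q) := mul_assoc _ _ _
          _ = AAn n ((S.erase k).erase l) * (xxn n k l * CCn n ((S.erase k).erase l) ^ q) := by
              rw [xx_mul_CC_pow S hS hk hl hkl]
          _ = (xxn n k l * AAn n ((S.erase k).erase l)) * CCn n ((S.erase k).erase l) ^ q := by
              rw [← mul_assoc, (comm_xx_AA n k l ((S.erase k).erase l)).eq]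
          _ = xxn n k l * (AAn n ((S.erase k).erase l) * CCn n ((S.erase k).erase l) ^ q) :=
              mul_assoc _ _ _
          _ = xxn n k l * (((2*q : ℕ) : ℚ) • (MMn n ((S.erase k).erase l)
                * CCn n ((S.erase k).erase l) ^ q)) := by rw [IH']
          _ = ((2*q : ℕ) : ℚ) • ((xxn n k l * MMn n ((S.erase k).erase l))
                * CCn n ((S.erase k).erase l) ^ q) := by rw [mul_smul_comm, mul_assoc]
          _ = ((2*q : ℕ) : ℚ) • ((MMn n S * xxn n k l) * CCn n ((S.erase k).erase l) ^ q) := by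
              rw [xx_MM' S hS hk hl hkl]
          _ = ((2*q : ℕ) : ℚ) • (MMn n S * (xxn n k l * CCn n ((S.erase k).erase l) ^ q)) := by
              rw [mul_assoc]
          _ = ((2*q : ℕ) : ℚ) • (MMn n S * (xxn n k l * CCn n S ^ q)) := by
              rw [← xx_mul_CC_pow S hS hk hl hkl]
    calc AAn n S * CCn n S ^ (q+1)
        = (AAn n S * CCn n S) * CCn n S ^ q := by rw [pow_succ', ← mul_assoc]
      _ = (∑ k ∈ S, ∑ l ∈ S, AAn n S * xxn n k l) * CCn n S ^ q := by
          rw [CCn, Finset.mul_sum]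
          simp_rw [Finset.mul_sum]
      _ = ∑ k ∈ S, ∑ l ∈ S, ((AAn n S * xxn n k l) * CCn n S ^ q) := by
          rw [Finset.sum_mul]
          exact Finset.sum_congr rfl fun k _ => Finset.sum_mul _ _ _
      _ = ∑ k ∈ S, ∑ l ∈ S, (((2*q : ℕ) : ℚ) • (MMn n S * (xxn n k l * CCn n S ^ q))
            + (((∑ u ∈ S, (eOS n k u + eOS n l u)) * xxn n k l) * CCn n S ^ q
              + ((∑ u ∈ S, (eOS n k u + eOS n l u)) * xxn n k l) * CCn n S ^ q)) :=
          Finset.sum_congr rfl fun k hk => Finset.sum_congr rfl fun l hl => point k hk l hl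
      _ = ((2*q : ℕ) : ℚ) • (MMn n S * (CCn n S * CCn n S ^ q))
          + ((MMn n S * CCn n S) * CCn n S ^ q + (MMn n S * CCn n S) * CCn n S ^ q) := by
          simp only [Finset.sum_add_distrib]
          congr 1
          · rw [CCn]
            simp only [Finset.sum_mul, Finset.mul_sum, Finset.smul_sum]
          · rw [← sum_EE_xx S hS]
            simp only [Finset.sum_mul, add_mul, Finset.sum_add_distrib]
      _ = ((2*(q+1) : ℕ) : ℚ) • (MMn n S * CCn n S ^ (q+1)) := by
          rw [← pow_succ', mul_assoc, ← pow_succ']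
          rw [show ((2*(q+1) : ℕ) : ℚ) = ((2*q : ℕ) : ℚ) + 2 by push_cast; ring, add_smul,
            two_smul]

end Part7

section Part8
variable {n : ℕ}

lemma sum_S0 (g : Fin (n+1) → OS n) :
    ∑ i ∈ Finset.univ.erase (Fin.last n), g i = ∑ i : Fin n, g i.castSucc := by
  have h1 : ∑ i ∈ Finset.univ.erase (Fin.last n), g i + g (Fin.last n)
      = ∑ i : Fin (n+1), g i := Finset.sum_erase_add _ _ (Finset.mem_univ _)
  have h2 : ∑ i : Fin (n+1), g i = (∑ i : Fin n, g i.castSucc) + g (Fin.last n) :=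
    Fin.sum_univ_castSucc g
  exact add_right_cancel (h1.trans h2)

lemma double_sum_eq (h : Fin n → Fin n → OS n) (hdiag : ∀ i, h i i = 0) :
    ∑ i : Fin n, ∑ j : Fin n, h i j
      = ∑ p ∈ Finset.univ.filter (fun p : Fin n × Fin n => p.1 < p.2), (h p.1 p.2 + h p.2 p.1) := by
  have e0 : ∑ i : Fin n, ∑ j : Fin n, h i j = ∑ p : Fin n × Fin n, h p.1 p.2 := by
    rw [← Finset.sum_product', Finset.univ_product_univ]
  have e1 : ∑ p : Fin n × Fin n, h p.1 p.2
      = ∑ p ∈ Finset.univ.filter (fun p : Fin n × Fin n => p.1 < p.2), h p.1 p.2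
        + ∑ p ∈ Finset.univ.filter (fun p : Fin n × Fin n => ¬ p.1 < p.2), h p.1 p.2 :=
    (Finset.sum_filter_add_sum_filter_not _ _ _).symm
  have e2 : ∑ p ∈ Finset.univ.filter (fun p : Fin n × Fin n => ¬ p.1 < p.2), h p.1 p.2
      = ∑ p ∈ Finset.univ.filter (fun p : Fin n × Fin n => p.2 < p.1), h p.1 p.2 := by
    refine (Finset.sum_subset ?_ ?_).symm
    · intro p hp
      simp only [Finset.mem_filter, Finset.mem_univ, true_and] at hp ⊢
      exact not_lt_of_gt hp
    · intro p hp hp2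
      simp only [Finset.mem_filter, Finset.mem_univ, true_and, not_lt] at hp hp2
      have heq : p.1 = p.2 := le_antisymm hp2 hp
      rw [heq]
      exact hdiag p.2
  have e3 : ∑ p ∈ Finset.univ.filter (fun p : Fin n × Fin n => p.2 < p.1), h p.1 p.2
      = ∑ p ∈ Finset.univ.filter (fun p : Fin n × Fin n => p.1 < p.2), h p.2 p.1 := by
    refine Finset.sum_equiv (Equiv.prodComm (Fin n) (Fin n)) ?_ ?_
    · intro p; simp [Equiv.prodComm]
    · intro p _; rfl
  rw [e0, e1, e2, e3, ← Finset.sum_add_distrib]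

lemma MM_S0 : MMn n (Finset.univ.erase (Fin.last n)) = mOS n := by
  rw [MMn, sum_S0, mOS]
  rfl

lemma AA_S0 : AAn n (Finset.univ.erase (Fin.last n)) = (2:ℚ) • aOS n := by
  rw [AAn, sum_S0]
  have : ∀ i : Fin n, ∑ j ∈ Finset.univ.erase (Fin.last n), eOS n i.castSucc j
      = ∑ j : Fin n, eOS n i.castSucc j.castSucc := fun i => sum_S0 _
  rw [Finset.sum_congr rfl fun i _ => this i, double_sum_eq _ (fun i => eOS_diag n _)]
  rw [aOS, Finset.smul_sum]
  refine Finset.sum_congr rfl fun p _ => ?_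
  rw [eOS_symm n p.2.castSucc p.1.castSucc, two_smul]

lemma CC_S0 : CCn n (Finset.univ.erase (Fin.last n)) = (2:ℚ) • cOS n := by
  rw [CCn, sum_S0]
  have : ∀ i : Fin n, ∑ j ∈ Finset.univ.erase (Fin.last n), xxn n i.castSucc j
      = ∑ j : Fin n, xxn n i.castSucc j.castSucc := fun i => sum_S0 _
  rw [Finset.sum_congr rfl fun i _ => this i, double_sum_eq _ (fun i => xx_diag n _)]
  rw [cOS, Finset.smul_sum]
  refine Finset.sum_congr rfl fun p _ => ?_
  rw [xx_symm n p.2.castSucc p.1.castSucc, two_smul]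
  rw [xxn, ffn, ffn, mul_add]

/-- the key scaled identity: `a c^q = q • (m c^q)` when `n = 2q+1`. -/
lemma acq (q : ℕ) (hq : n = 2*q+1) :
    aOS n * cOS n ^ q = (q : ℚ) • (mOS n * cOS n ^ q) := by
  have hS : Fin.last n ∉ Finset.univ.erase (Fin.last n) := Finset.notMem_erase _ _
  have hcard : (Finset.univ.erase (Fin.last n)).card = 2*q+1 := by
    rw [Finset.card_erase_of_mem (Finset.mem_univ _), Finset.card_univ, Fintype.card_fin]
    omega
  have hcore := core q (Finset.univ.erase (Fin.last n)) hS hcard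
  rw [AA_S0, CC_S0, MM_S0] at hcore
  simp only [smul_pow, smul_mul_assoc, mul_smul_comm, smul_smul] at hcore
  have h2 : ((2:ℚ) ^ q * 2) ≠ 0 := by positivity
  have hcore2 : ((2:ℚ) ^ q * 2) • (aOS n * cOS n ^ q)
      = ((2:ℚ) ^ q * 2) • ((q:ℚ) • (mOS n * cOS n ^ q)) := by
    rw [hcore, smul_smul]
    congr 1
    push_cast
    ring
  exact smul_right_injective (OS n) h2 hcore2

end Part8


section Part9
variable {n : ℕ}

lemma anticomm_sums {ι κ : Type*} (s : Finset ι) (t : Finset κ) (g : ι → OS n) (h : κ → OS n)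
    (hp : ∀ i j, g i * h j = -(h j * g i)) :
    (∑ i ∈ s, g i) * (∑ j ∈ t, h j) = -((∑ j ∈ t, h j) * (∑ i ∈ s, g i)) := by
  have e1 : (∑ i ∈ s, g i) * (∑ j ∈ t, h j) = ∑ i ∈ s, ∑ j ∈ t, g i * h j := by
    rw [Finset.sum_mul]
    exact Finset.sum_congr rfl fun i _ => Finset.mul_sum _ _ _
  have e2 : (∑ j ∈ t, h j) * (∑ i ∈ s, g i) = ∑ j ∈ t, ∑ i ∈ s, h j * g i := by
    rw [Finset.sum_mul]
    exact Finset.sum_congr rfl fun j _ => Finset.mul_sum _ _ _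
  have h4 : ∑ i ∈ s, ∑ j ∈ t, g i * h j = ∑ i ∈ s, ∑ j ∈ t, (-(h j * g i)) :=
    Finset.sum_congr rfl fun i _ => Finset.sum_congr rfl fun j _ => hp i j
  have h5 : ∑ i ∈ s, ∑ j ∈ t, (-(h j * g i)) = -∑ i ∈ s, ∑ j ∈ t, (h j * g i) := by
    simp only [Finset.sum_neg_distrib]
  have h6 : (∑ i ∈ s, ∑ j ∈ t, (h j * g i)) = ∑ j ∈ t, ∑ i ∈ s, h j * g i := Finset.sum_comm
  rw [e1, e2, h4, h5, h6]

lemma aOS_sq : aOS n * aOS n = 0 :=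
  antisym_sum _ _ fun _ _ => eOS_anticomm n _ _ _ _

lemma mOS_sq : mOS n * mOS n = 0 :=
  antisym_sum _ _ fun _ _ => eOS_anticomm n _ _ _ _

lemma mOS_aOS : mOS n * aOS n = -(aOS n * mOS n) :=
  anticomm_sums _ _ _ _ fun _ _ => eOS_anticomm n _ _ _ _

lemma comm_c_a : Commute (cOS n) (aOS n) :=
  Commute.sum_left _ _ _ fun _ _ => Commute.add_left
    (Commute.sum_right _ _ _ fun _ _ => comm_EE_E n _ _ _ _ _ _)
    (Commute.sum_right _ _ _ fun _ _ => comm_EE_E n _ _ _ _ _ _)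

lemma comm_c_m : Commute (cOS n) (mOS n) :=
  Commute.sum_left _ _ _ fun _ _ => Commute.add_left
    (Commute.sum_right _ _ _ fun _ _ => comm_EE_E n _ _ _ _ _ _)
    (Commute.sum_right _ _ _ fun _ _ => comm_EE_E n _ _ _ _ _ _)

lemma gOS_eq : gOS n = aOS n * mOS n - ((((n+1)/2 : ℕ)):ℚ) • cOS n := by
  rw [gOS, Nat.cast_smul_eq_nsmul]

lemma GA (k : ℕ) : aOS n * gOS n ^ k = (-((((n+1)/2 : ℕ)):ℚ))^k • (aOS n * cOS n ^ k) := by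
  induction k with
  | zero => simp
  | succ k IH =>
    rw [pow_succ, ← mul_assoc, IH, smul_mul_assoc, gOS_eq, mul_sub]
    have h1 : (aOS n * cOS n ^ k) * (aOS n * mOS n) = 0 := by
      calc (aOS n * cOS n ^ k) * (aOS n * mOS n)
          = aOS n * ((cOS n ^ k * aOS n) * mOS n) := by
            rw [mul_assoc, ← mul_assoc (cOS n ^ k)]
        _ = aOS n * ((aOS n * cOS n ^ k) * mOS n) := by rw [(comm_c_a.pow_left k).eq]
        _ = ((aOS n * aOS n) * cOS n ^ k) * mOS n := by rw [← mul_assoc, ← mul_assoc]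
        _ = 0 := by rw [aOS_sq, zero_mul, zero_mul]
    have h2 : (aOS n * cOS n ^ k) * (((((n+1)/2 : ℕ)):ℚ) • cOS n)
        = ((((n+1)/2 : ℕ)):ℚ) • (aOS n * cOS n ^ (k+1)) := by
      rw [mul_smul_comm, mul_assoc, ← pow_succ]
    rw [h1, h2, zero_sub, ← neg_smul, smul_smul, ← pow_succ]

lemma GM (k : ℕ) : mOS n * gOS n ^ k = (-((((n+1)/2 : ℕ)):ℚ))^k • (mOS n * cOS n ^ k) := by
  induction k with
  | zero => simp
  | succ k IH =>
    rw [pow_succ, ← mul_assoc, IH, smul_mul_assoc, gOS_eq, mul_sub]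
    have h1 : (mOS n * cOS n ^ k) * (aOS n * mOS n) = 0 := by
      calc (mOS n * cOS n ^ k) * (aOS n * mOS n)
          = mOS n * ((cOS n ^ k * aOS n) * mOS n) := by
            rw [mul_assoc, ← mul_assoc (cOS n ^ k)]
        _ = mOS n * ((aOS n * cOS n ^ k) * mOS n) := by rw [(comm_c_a.pow_left k).eq]
        _ = mOS n * (aOS n * (cOS n ^ k * mOS n)) := by rw [mul_assoc]
        _ = mOS n * (aOS n * (mOS n * cOS n ^ k)) := by rw [(comm_c_m.pow_left k).eq]
        _ = ((mOS n * aOS n) * mOS n) * cOS n ^ k := by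
            rw [← mul_assoc, ← mul_assoc]
        _ = 0 := by
            rw [mOS_aOS, neg_mul, mul_assoc, mOS_sq, mul_zero, neg_zero, zero_mul]
    have h2 : (mOS n * cOS n ^ k) * (((((n+1)/2 : ℕ)):ℚ) • cOS n)
        = ((((n+1)/2 : ℕ)):ℚ) • (mOS n * cOS n ^ (k+1)) := by
      rw [mul_smul_comm, mul_assoc, ← pow_succ]
    rw [h1, h2, zero_sub, ← neg_smul, smul_smul, ← pow_succ]

end Part9


/-- For every odd integer `n ≥ 3`, with `p = (n+1)/2`, the identity
`a·g^{p−1} = (p−1)·m·g^{p−1}` holds in `OS_n`. -/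
theorem aOS_g_pow_eq (n : ℕ) (hn : 3 ≤ n) (hno : Odd n) :
    aOS n * gOS n ^ ((n+1)/2 - 1) = ((n+1)/2 - 1 : ℕ) • (mOS n * gOS n ^ ((n+1)/2 - 1)) := by
  obtain ⟨t, ht⟩ := hno
  have hq : (n+1)/2 - 1 = t := by omega
  have hn2 : n = 2*t+1 := by omega
  rw [hq, GA t, GM t, ← Nat.cast_smul_eq_nsmul ℚ, acq t hn2, smul_smul, smul_smul]
  congr 1
  ring

end
end

section
/- Let n ≥ 2 be an integer. (i) For every integer d ≥ 0, if {a·c^d, m·c^d} is linearly independent over ℚ in OS_n, then a·m·c^d ≠ 0 in OS_n. (ii) For every integer d ≥ 1, if {a·m·c^{d−1}, c^d} is linearly independent over ℚ in OS_n, then a·c^d + m·c^d ≠ 0 in OS_n. -/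
noncomputable section

namespace OS17

open CliffordAlgebra

/-- The dual functional sending every generator to `1`. -/
def fD (n : ℕ) : (OSidx n →₀ ℚ) →ₗ[ℚ] ℚ :=
  Finsupp.lsum ℚ fun _ => LinearMap.id

/-- Left contraction by `fD n`: an odd derivation on the ambient exterior algebra. -/
def Dd (n : ℕ) : OSamb n →ₗ[ℚ] OSamb n :=
  CliffordAlgebra.contractLeft (Q := (0 : QuadraticForm ℚ (OSidx n →₀ ℚ))) (fD n)

/-- Shorthand for the quotient map. -/
abbrev mko (n : ℕ) : OSamb n →ₐ[ℚ] OS n := RingQuot.mkAlgHom ℚ (OSRel n)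

/-- The basis vector for the pair `{i,j}`, or `0` when `i = j`. -/
def Vsel (n : ℕ) (i j : Fin (n+1)) : OSidx n →₀ ℚ :=
  if h : i = j then 0
  else Finsupp.single ⟨s(i,j), by simp [Sym2.mk_isDiag_iff, h]⟩ 1

lemma fD_single (n : ℕ) (s : OSidx n) : fD n (Finsupp.single s (1 : ℚ)) = 1 := by
  simp [fD]

lemma fD_Vsel (n : ℕ) {i j : Fin (n+1)} (h : i ≠ j) : fD n (Vsel n i j) = 1 := by
  rw [Vsel, dif_neg h, fD_single]

lemma eOS_eq (n : ℕ) (i j : Fin (n+1)) :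
    eOS n i j = mko n (ExteriorAlgebra.ι ℚ (Vsel n i j)) := by
  rw [eOS, Vsel]
  split_ifs with h
  · simp
  · rfl

def Pn (n : ℕ) : Finset (Fin n × Fin n) :=
  Finset.univ.filter fun p : Fin n × Fin n => p.1 < p.2

def VA (n : ℕ) : OSidx n →₀ ℚ := ∑ p ∈ Pn n, Vsel n p.1.castSucc p.2.castSucc

def WA (n : ℕ) : OSidx n →₀ ℚ := ∑ i : Fin n, Vsel n i.castSucc (Fin.last n)

def AA (n : ℕ) : OSamb n := ExteriorAlgebra.ι ℚ (VA n)

def MM (n : ℕ) : OSamb n := ExteriorAlgebra.ι ℚ (WA n)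

def wPair (n : ℕ) (p : Fin n × Fin n) : OSidx n →₀ ℚ :=
  Vsel n p.1.castSucc (Fin.last n) + Vsel n p.2.castSucc (Fin.last n)

def CA (n : ℕ) : OSamb n :=
  ∑ p ∈ Pn n, ExteriorAlgebra.ι ℚ (Vsel n p.1.castSucc p.2.castSucc) *
    ExteriorAlgebra.ι ℚ (wPair n p)

lemma mk_A (n : ℕ) : mko n (AA n) = aOS n := by
  rw [AA, VA, map_sum, map_sum, aOS]
  exact Finset.sum_congr rfl fun p _ => (eOS_eq n _ _).symm

lemma mk_M (n : ℕ) : mko n (MM n) = mOS n := by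
  rw [MM, WA, map_sum, map_sum, mOS]
  exact Finset.sum_congr rfl fun i _ => (eOS_eq n _ _).symm

lemma mk_C (n : ℕ) : mko n (CA n) = cOS n := by
  rw [CA, map_sum, cOS]
  refine Finset.sum_congr rfl fun p _ => ?_
  rw [wPair, map_add, mul_add, map_add, map_mul, map_mul]
  rw [eOS_eq n p.1.castSucc p.2.castSucc, eOS_eq n p.1.castSucc (Fin.last n),
    eOS_eq n p.2.castSucc (Fin.last n)]

/-- The twisted Leibniz rule for the contraction. -/
lemma leibniz (n : ℕ) (x : OSamb n) :
    ∀ y : OSamb n, Dd n (x * y) = Dd n x * y + involute x * Dd n y := by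
  induction x using CliffordAlgebra.induction with
  | algebraMap r =>
    intro y
    rw [Dd, CliffordAlgebra.contractLeft_algebraMap_mul,
      CliffordAlgebra.contractLeft_algebraMap, zero_mul, zero_add, AlgHom.commutes]
  | ι v =>
    intro y
    rw [Dd, CliffordAlgebra.contractLeft_ι_mul, CliffordAlgebra.contractLeft_ι,
      CliffordAlgebra.involute_ι, Algebra.smul_def, sub_eq_add_neg, neg_mul]
  | mul a b ha hb =>
    intro y
    rw [mul_assoc, ha (b * y), hb y, ha b, map_mul involute a b]
    simp only [mul_add, add_mul, mul_assoc]
    abel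
  | add a b ha hb =>
    intro y
    simp only [add_mul, map_add, ha y, hb y]
    abel

lemma D_eAmb (n : ℕ) {i j : Fin (n+1)} (h : i ≠ j) : Dd n (eAmb n i j h) = 1 := by
  rw [eAmb, Dd, CliffordAlgebra.contractLeft_ι, fD_single, map_one]

lemma invol_eAmb (n : ℕ) {i j : Fin (n+1)} (h : i ≠ j) :
    involute (eAmb n i j h) = -(eAmb n i j h) :=
  CliffordAlgebra.involute_ι _

/-- The linear map underlying the triangular-matrix algebra morphism. -/
def LM (n : ℕ) : (OSidx n →₀ ℚ) →ₗ[ℚ] Matrix (Fin 2) (Fin 2) (OS n) where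
  toFun v := !![-(mko n (ExteriorAlgebra.ι ℚ v)), algebraMap ℚ (OS n) (fD n v); 0,
      mko n (ExteriorAlgebra.ι ℚ v)]
  map_add' v w := by
    ext i j
    fin_cases i <;> fin_cases j <;> simp [map_add, neg_add] <;> abel
  map_smul' c v := by
    ext i j
    fin_cases i <;> fin_cases j <;>
      simp [map_smul, Algebra.smul_def, map_mul, smul_neg]

lemma LM_sq (n : ℕ) (v : OSidx n →₀ ℚ) : LM n v * LM n v = 0 := by
  have h : mko n (ExteriorAlgebra.ι ℚ v) * mko n (ExteriorAlgebra.ι ℚ v) = 0 := by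
    rw [← map_mul, ExteriorAlgebra.ι_sq_zero, map_zero]
  have hc : algebraMap ℚ (OS n) (fD n v) * mko n (ExteriorAlgebra.ι ℚ v)
      = mko n (ExteriorAlgebra.ι ℚ v) * algebraMap ℚ (OS n) (fD n v) :=
    Algebra.commutes _ _
  simp only [LM, LinearMap.coe_mk, AddHom.coe_mk]
  rw [Matrix.mul_fin_two]
  ext i j
  fin_cases i <;> fin_cases j <;>
    simp [h, neg_mul, hc]

/-- The triangular-matrix algebra morphism on the ambient exterior algebra. -/
def Phi0 (n : ℕ) : OSamb n →ₐ[ℚ] Matrix (Fin 2) (Fin 2) (OS n) :=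
  ExteriorAlgebra.lift ℚ ⟨LM n, LM_sq n⟩

lemma Phi0_apply (n : ℕ) (x : OSamb n) :
    Phi0 n x = !![mko n (involute x), mko n (Dd n x); 0, mko n x] := by
  induction x using CliffordAlgebra.induction with
  | algebraMap r =>
    rw [AlgHom.commutes]
    have h1 : involute (algebraMap ℚ (OSamb n) r) = algebraMap ℚ (OSamb n) r :=
      AlgHom.commutes _ r
    have h2 : Dd n (algebraMap ℚ (OSamb n) r) = 0 := by simp [Dd]
    rw [h1, h2, map_zero, AlgHom.commutes]
    ext i j
    fin_cases i <;> fin_cases j <;>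
      simp [Matrix.algebraMap_matrix_apply]
  | ι v =>
    rw [Phi0, ExteriorAlgebra.lift_ι_apply]
    have h1 : involute (ExteriorAlgebra.ι ℚ v) = -(ExteriorAlgebra.ι ℚ v) :=
      CliffordAlgebra.involute_ι _
    have h2 : Dd n (ExteriorAlgebra.ι ℚ v) = algebraMap ℚ (OSamb n) (fD n v) := by
      simp [Dd]
    rw [h1, h2, map_neg, AlgHom.commutes]
    rfl
  | mul a b ha hb =>
    rw [map_mul, ha, hb, Matrix.mul_fin_two, map_mul involute, map_mul (mko n),
      leibniz, map_add, map_mul, map_mul, map_mul]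
    ext i j
    fin_cases i <;> fin_cases j <;> simp <;> abel
  | add a b ha hb =>
    rw [map_add, ha, hb, map_add involute, map_add (mko n), map_add (Dd n), map_add (mko n)]
    ext i j
    fin_cases i <;> fin_cases j <;> simp

lemma Phi0_rel (n : ℕ) {x y : OSamb n} (h : OSRel n x y) : Phi0 n x = Phi0 n y := by
  cases h with
  | rel i j k hij hjk hik =>
    have hmk : mko n (eAmb n i k hik * eAmb n j k hjk - eAmb n i j hij * eAmb n j k hjk
        + eAmb n i j hij * eAmb n i k hik) = 0 := by
      simpa using RingQuot.mkAlgHom_rel ℚ (OSRel.rel i j k hij hjk hik)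
    have hinv : involute (eAmb n i k hik * eAmb n j k hjk - eAmb n i j hij * eAmb n j k hjk
        + eAmb n i j hij * eAmb n i k hik) = eAmb n i k hik * eAmb n j k hjk
        - eAmb n i j hij * eAmb n j k hjk + eAmb n i j hij * eAmb n i k hik := by
      simp [map_add, map_sub, map_mul, invol_eAmb]
    have hD : Dd n (eAmb n i k hik * eAmb n j k hjk - eAmb n i j hij * eAmb n j k hjk
        + eAmb n i j hij * eAmb n i k hik) = 0 := by
      rw [map_add, map_sub, leibniz n, leibniz n, leibniz n]
      simp only [D_eAmb, invol_eAmb, one_mul, mul_one, neg_mul]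
      abel
    rw [Phi0_apply, Phi0_apply, hinv, hD, hmk]
    simp

/-- The triangular-matrix algebra morphism on `OS n`. -/
def Phi (n : ℕ) : OS n →ₐ[ℚ] Matrix (Fin 2) (Fin 2) (OS n) :=
  RingQuot.liftAlgHom ℚ ⟨Phi0 n, by intro x y h; exact Phi0_rel n h⟩

/-- If `x` maps to `0` in `OS n`, then so does `Dd n x`. -/
lemma mk_D_zero (n : ℕ) (z : OSamb n) (hz : mko n z = 0) : mko n (Dd n z) = 0 := by
  have h1 : Phi n (mko n z) = Phi0 n z :=
    RingQuot.liftAlgHom_mkAlgHom_apply _ _ _ _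
  rw [hz, map_zero, Phi0_apply] at h1
  have h2 := congrFun (congrFun h1 0) 1
  simpa using h2.symm

/-- Summing `g p.1 + g p.2` over all pairs `p.1 < p.2`. -/
lemma pair_sum {V : Type*} [AddCommGroup V] [Module ℚ V] (n : ℕ) (hn : 1 ≤ n)
    (g : Fin n → V) :
    ∑ p ∈ Pn n, (g p.1 + g p.2) = ((n : ℚ) - 1) • ∑ i, g i := by
  classical
  have hT : ∑ p ∈ Pn n, (g p.1 + g p.2)
      = ∑ i : Fin n, ∑ j : Fin n, if i < j then g i + g j else 0 := by
    rw [Pn, Finset.sum_filter, Fintype.sum_prod_type]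
  have hT' : ∑ p ∈ Pn n, (g p.1 + g p.2)
      = ∑ i : Fin n, ∑ j : Fin n, if j < i then g i + g j else 0 := by
    rw [hT, Finset.sum_comm]
    refine Finset.sum_congr rfl fun i _ => Finset.sum_congr rfl fun j _ => ?_
    split_ifs <;> [exact add_comm _ _; rfl]
  have hU : (∑ p ∈ Pn n, (g p.1 + g p.2)) + (∑ p ∈ Pn n, (g p.1 + g p.2))
      = ∑ i : Fin n, ∑ j : Fin n, if i ≠ j then g i + g j else 0 := by
    nth_rewrite 2 [hT']
    rw [hT]
    rw [← Finset.sum_add_distrib]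
    refine Finset.sum_congr rfl fun i _ => ?_
    rw [← Finset.sum_add_distrib]
    refine Finset.sum_congr rfl fun j _ => ?_
    rcases lt_trichotomy i j with h | h | h
    · simp [h, not_lt_of_gt h, h.ne]
    · simp [h]
    · simp [h, not_lt_of_gt h, h.ne']
  have hinner : ∀ i : Fin n, (∑ j : Fin n, if i ≠ j then g i + g j else 0)
      = ((n : ℚ) - 1) • g i + (∑ j, g j - g i) := by
    intro i
    have e1 : (∑ j : Fin n, if i ≠ j then g i + g j else 0)
        = (∑ j : Fin n, if i ≠ j then g i else 0) + ∑ j : Fin n, if i ≠ j then g j else 0 := by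
      rw [← Finset.sum_add_distrib]
      refine Finset.sum_congr rfl fun j _ => ?_
      split_ifs <;> simp
    have e2 : (∑ j : Fin n, if i ≠ j then g i else 0) = ((n : ℚ) - 1) • g i := by
      rw [← Finset.sum_filter, Finset.sum_const]
      have hc : (Finset.univ.filter fun j => i ≠ j).card = n - 1 := by
        have : (Finset.univ.filter fun j : Fin n => i ≠ j) = Finset.univ.erase i := by
          ext j
          simp [Finset.mem_erase, ne_comm]
        rw [this, Finset.card_erase_of_mem (Finset.mem_univ i), Finset.card_univ,
          Fintype.card_fin]
      rw [hc, ← Nat.cast_smul_eq_nsmul ℚ]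
      congr 1
      rw [Nat.cast_sub hn, Nat.cast_one]
    have e3 : (∑ j : Fin n, if i ≠ j then g j else 0) = ∑ j, g j - g i := by
      have : ∀ j : Fin n, (if i ≠ j then g j else 0) = g j - (if i = j then g j else 0) := by
        intro j
        split_ifs with h1 h2 h2 <;> simp_all
      rw [Finset.sum_congr rfl fun j _ => this j, Finset.sum_sub_distrib,
        Finset.sum_ite_eq Finset.univ i g]
      simp
    rw [e1, e2, e3]
  have hUval : (∑ p ∈ Pn n, (g p.1 + g p.2)) + (∑ p ∈ Pn n, (g p.1 + g p.2))
      = (((n : ℚ) - 1) • ∑ i, g i) + (((n : ℚ) - 1) • ∑ i, g i) := by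
    rw [hU, Finset.sum_congr rfl fun i _ => hinner i, Finset.sum_add_distrib,
      ← Finset.smul_sum, Finset.sum_sub_distrib, Finset.sum_const, Finset.card_univ,
      Fintype.card_fin, ← Nat.cast_smul_eq_nsmul ℚ]
    module
  have h2 := hUval
  rw [← two_smul ℚ, ← two_smul ℚ (((n : ℚ) - 1) • ∑ i, g i)] at h2
  exact smul_right_injective V (two_ne_zero) h2

lemma castSucc_ne_of_lt {n : ℕ} {i j : Fin n} (h : i < j) :
    (i.castSucc : Fin (n+1)) ≠ j.castSucc :=
  fun hh => (ne_of_lt h) (Fin.castSucc_injective n hh)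

lemma castSucc_ne_last {n : ℕ} (i : Fin n) : (i.castSucc : Fin (n+1)) ≠ Fin.last n :=
  (Fin.castSucc_lt_last i).ne

lemma fD_WA (n : ℕ) : fD n (WA n) = n := by
  rw [WA, map_sum]
  rw [Finset.sum_congr rfl fun i _ => fD_Vsel n (castSucc_ne_last i)]
  simp

lemma D_CA (n : ℕ) (hn : 1 ≤ n) :
    Dd n (CA n) = ((n : ℚ) - 1) • MM n - (2 : ℚ) • AA n := by
  have hterm : ∀ p ∈ Pn n,
      Dd n (ExteriorAlgebra.ι ℚ (Vsel n p.1.castSucc p.2.castSucc) *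
        ExteriorAlgebra.ι ℚ (wPair n p))
      = (ExteriorAlgebra.ι ℚ (Vsel n p.1.castSucc (Fin.last n))
          + ExteriorAlgebra.ι ℚ (Vsel n p.2.castSucc (Fin.last n)))
        - (2 : ℚ) • ExteriorAlgebra.ι ℚ (Vsel n p.1.castSucc p.2.castSucc) := by
    intro p hp
    have hlt : p.1 < p.2 := by simpa [Pn] using hp
    have h1 : fD n (Vsel n p.1.castSucc p.2.castSucc) = 1 := fD_Vsel n (castSucc_ne_of_lt hlt)
    have h2 : fD n (wPair n p) = 2 := by
      rw [wPair, map_add, fD_Vsel n (castSucc_ne_last p.1), fD_Vsel n (castSucc_ne_last p.2)]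
      norm_num
    rw [leibniz]
    have hD1 : Dd n (ExteriorAlgebra.ι ℚ (Vsel n p.1.castSucc p.2.castSucc))
        = algebraMap ℚ (OSamb n) 1 := by
      rw [Dd, CliffordAlgebra.contractLeft_ι, h1]
    have hD2 : Dd n (ExteriorAlgebra.ι ℚ (wPair n p)) = algebraMap ℚ (OSamb n) 2 := by
      rw [Dd, CliffordAlgebra.contractLeft_ι, h2]
    rw [hD1, hD2, CliffordAlgebra.involute_ι, map_one, one_mul, neg_mul,
      Algebra.algebraMap_eq_smul_one, mul_smul_comm, mul_one, wPair, map_add]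
    abel
  rw [CA, map_sum, Finset.sum_congr rfl hterm, Finset.sum_sub_distrib]
  have hA : ∑ p ∈ Pn n, (2:ℚ) • ExteriorAlgebra.ι ℚ (Vsel n p.1.castSucc p.2.castSucc)
      = (2:ℚ) • AA n := by
    rw [← Finset.smul_sum, AA, VA, map_sum]
  have hM : ∑ p ∈ Pn n, (ExteriorAlgebra.ι ℚ (Vsel n p.1.castSucc (Fin.last n))
      + ExteriorAlgebra.ι ℚ (Vsel n p.2.castSucc (Fin.last n)))
      = ((n:ℚ) - 1) • MM n := by
    rw [pair_sum n hn (fun i => ExteriorAlgebra.ι ℚ (Vsel n i.castSucc (Fin.last n))),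
      MM, WA, map_sum]
  rw [hA, hM]

lemma anti {n : ℕ} (x y : OSidx n →₀ ℚ) :
    ExteriorAlgebra.ι ℚ x * ExteriorAlgebra.ι ℚ y
      = -(ExteriorAlgebra.ι ℚ y * ExteriorAlgebra.ι ℚ x) :=
  eq_neg_of_add_eq_zero_left (ExteriorAlgebra.ι_add_mul_swap x y)

lemma comm3 {n : ℕ} (x y z : OSidx n →₀ ℚ) :
    (ExteriorAlgebra.ι ℚ x * ExteriorAlgebra.ι ℚ y) * ExteriorAlgebra.ι ℚ z
      = ExteriorAlgebra.ι ℚ z * (ExteriorAlgebra.ι ℚ x * ExteriorAlgebra.ι ℚ y) := by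
  rw [mul_assoc, anti y z, mul_neg, ← mul_assoc, anti x z, neg_mul, neg_neg, mul_assoc]

lemma CA_mul_ι (n : ℕ) (z : OSidx n →₀ ℚ) :
    CA n * ExteriorAlgebra.ι ℚ z = ExteriorAlgebra.ι ℚ z * CA n := by
  rw [CA, Finset.sum_mul, Finset.mul_sum]
  exact Finset.sum_congr rfl fun p _ => comm3 _ _ _

lemma CA_mul_A (n : ℕ) : CA n * AA n = AA n * CA n := CA_mul_ι n (VA n)

lemma CA_mul_M (n : ℕ) : CA n * MM n = MM n * CA n := CA_mul_ι n (WA n)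

lemma AM_C_comm (n : ℕ) : (AA n * MM n) * CA n = CA n * (AA n * MM n) := by
  calc (AA n * MM n) * CA n = AA n * (MM n * CA n) := mul_assoc _ _ _
    _ = AA n * (CA n * MM n) := by rw [CA_mul_M]
    _ = (AA n * CA n) * MM n := (mul_assoc _ _ _).symm
    _ = (CA n * AA n) * MM n := by rw [CA_mul_A]
    _ = CA n * (AA n * MM n) := mul_assoc _ _ _

lemma invol_CA (n : ℕ) : involute (CA n) = CA n := by
  rw [CA, map_sum]
  refine Finset.sum_congr rfl fun p _ => ?_
  rw [map_mul, CliffordAlgebra.involute_ι, CliffordAlgebra.involute_ι, neg_mul_neg]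

lemma AMA (n : ℕ) : AA n * MM n * AA n = 0 := by
  rw [mul_assoc, AA, MM, anti (WA n) (VA n), mul_neg, ← mul_assoc,
    ExteriorAlgebra.ι_sq_zero, zero_mul, neg_zero]

lemma AMM (n : ℕ) : AA n * MM n * MM n = 0 := by
  rw [mul_assoc, MM, ExteriorAlgebra.ι_sq_zero, mul_zero]

lemma AM_DC (n : ℕ) (hn : 1 ≤ n) : AA n * MM n * Dd n (CA n) = 0 := by
  rw [D_CA n hn, mul_sub, mul_smul_comm, mul_smul_comm, AMM, AMA,
    smul_zero, smul_zero, sub_zero]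

lemma AM_DCpow (n : ℕ) (hn : 1 ≤ n) (d : ℕ) : AA n * MM n * Dd n (CA n ^ d) = 0 := by
  induction d with
  | zero =>
    rw [pow_zero, Dd, CliffordAlgebra.contractLeft_one, mul_zero]
  | succ d ih =>
    rw [pow_succ', leibniz, invol_CA, mul_add, ← mul_assoc, ← mul_assoc (AA n * MM n),
      AM_DC n hn, zero_mul, zero_add, AM_C_comm, mul_assoc, ih, mul_zero]

lemma ApM_C_comm (n : ℕ) : (AA n + MM n) * CA n = CA n * (AA n + MM n) := by
  rw [add_mul, mul_add, CA_mul_A, CA_mul_M]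

lemma ApM_DC (n : ℕ) (hn : 1 ≤ n) :
    (AA n + MM n) * Dd n (CA n) = ((n : ℚ) + 1) • (AA n * MM n) := by
  rw [D_CA n hn, add_mul, mul_sub, mul_sub, mul_smul_comm, mul_smul_comm,
    mul_smul_comm, mul_smul_comm]
  rw [show AA n * AA n = 0 from ExteriorAlgebra.ι_sq_zero _,
    show MM n * MM n = 0 from ExteriorAlgebra.ι_sq_zero _,
    show MM n * AA n = -(AA n * MM n) from anti _ _]
  rw [smul_zero, smul_zero, smul_neg]
  module

lemma ApM_DCpow (n : ℕ) (hn : 1 ≤ n) (d : ℕ) :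
    (AA n + MM n) * Dd n (CA n ^ (d+1))
      = (((d:ℚ)+1) * ((n : ℚ) + 1)) • (AA n * MM n * CA n ^ d) := by
  induction d with
  | zero =>
    rw [pow_one, ApM_DC n hn, pow_zero, mul_one]
    norm_num
  | succ d ih =>
    rw [pow_succ' (CA n) (d+1), leibniz n, invol_CA, mul_add]
    rw [← mul_assoc (AA n + MM n) (Dd n (CA n)), ApM_DC n hn, smul_mul_assoc]
    rw [← mul_assoc (AA n + MM n) (CA n), ApM_C_comm, mul_assoc (CA n), ih, mul_smul_comm]
    rw [← mul_assoc (CA n), ← AM_C_comm, mul_assoc (AA n * MM n), ← pow_succ']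
    rw [← add_smul]
    congr 1
    push_cast
    ring

lemma key1 (n : ℕ) (hn : 1 ≤ n) (d : ℕ) :
    Dd n (AA n * MM n * CA n ^ d)
      = fD n (VA n) • (MM n * CA n ^ d) - fD n (WA n) • (AA n * CA n ^ d) := by
  have hDA : Dd n (AA n) = algebraMap ℚ (OSamb n) (fD n (VA n)) := by simp [Dd, AA]
  have hDM : Dd n (MM n) = algebraMap ℚ (OSamb n) (fD n (WA n)) := by simp [Dd, MM]
  have hIA : involute (AA n) = -AA n := CliffordAlgebra.involute_ι _
  have hIM : involute (MM n) = -MM n := CliffordAlgebra.involute_ι _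
  rw [mul_assoc, leibniz n, leibniz n, hDA, hDM, hIA, hIM]
  rw [← Algebra.smul_def, ← Algebra.smul_def]
  have h0 : AA n * (MM n * Dd n (CA n ^ d)) = 0 := by
    rw [← mul_assoc]; exact AM_DCpow n hn d
  simp only [neg_mul, mul_neg, neg_neg, mul_add, mul_smul_comm, mul_assoc, h0]
  module

lemma key2 (n : ℕ) (hn : 1 ≤ n) (d : ℕ) :
    Dd n ((AA n + MM n) * CA n ^ (d+1))
      = (fD n (VA n) + fD n (WA n)) • CA n ^ (d+1)
        - (((d:ℚ)+1) * ((n : ℚ) + 1)) • (AA n * MM n * CA n ^ d) := by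
  have hDA : Dd n (AA n) = algebraMap ℚ (OSamb n) (fD n (VA n)) := by simp [Dd, AA]
  have hDM : Dd n (MM n) = algebraMap ℚ (OSamb n) (fD n (WA n)) := by simp [Dd, MM]
  have hIA : involute (AA n) = -AA n := CliffordAlgebra.involute_ι _
  have hIM : involute (MM n) = -MM n := CliffordAlgebra.involute_ι _
  rw [leibniz n, map_add involute, hIA, hIM, map_add (Dd n), hDA, hDM,
    ← map_add (algebraMap ℚ (OSamb n)), ← Algebra.smul_def]
  rw [show -AA n + -MM n = -(AA n + MM n) from (neg_add _ _).symm, neg_mul,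
    ApM_DCpow n hn d, sub_eq_add_neg]

end OS17

/-- Let `n ≥ 2`. (i) For every `d ≥ 0`, if `{a·cᵈ, m·cᵈ}` is linearly
independent in `OS_n` then `a·m·cᵈ ≠ 0`. (ii) For every `d ≥ 1`, if `{a·m·c^{d−1}, cᵈ}` is
linearly independent in `OS_n` then `a·cᵈ + m·cᵈ ≠ 0`. -/
theorem linearIndependent_implies_nonzero (n : ℕ) (hn : 2 ≤ n) :
    (∀ d : ℕ, LinearIndependent ℚ ![aOS n * cOS n ^ d, mOS n * cOS n ^ d] →
      aOS n * mOS n * cOS n ^ d ≠ 0) ∧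
    (∀ d : ℕ, 1 ≤ d →
      LinearIndependent ℚ ![aOS n * mOS n * cOS n ^ (d-1), cOS n ^ d] →
      aOS n * cOS n ^ d + mOS n * cOS n ^ d ≠ 0) := by
  have hn1 : 1 ≤ n := le_trans (by norm_num) hn
  constructor
  · intro d hind h0
    have hmk : OS17.mko n (OS17.AA n * OS17.MM n * OS17.CA n ^ d) = 0 := by
      rw [map_mul, map_mul, map_pow, OS17.mk_A, OS17.mk_M, OS17.mk_C]
      exact h0
    have h2 := OS17.mk_D_zero n _ hmk
    rw [OS17.key1 n hn1 d, map_sub, map_smul, map_smul, map_mul, map_mul, map_pow,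
      OS17.mk_A, OS17.mk_M, OS17.mk_C] at h2
    have h3 : (-(OS17.fD n (OS17.WA n))) • (aOS n * cOS n ^ d)
        + (OS17.fD n (OS17.VA n)) • (mOS n * cOS n ^ d) = 0 := by
      rw [neg_smul, add_comm, ← sub_eq_add_neg]
      exact h2
    have h4 := (LinearIndependent.pair_iff.mp hind _ _ h3).1
    rw [neg_eq_zero, OS17.fD_WA] at h4
    have : n = 0 := by exact_mod_cast h4
    omega
  · intro d hd hind h0
    obtain ⟨k, rfl⟩ : ∃ k, d = k + 1 := ⟨d - 1, (Nat.succ_pred_eq_of_pos hd).symm⟩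
    have hmk : OS17.mko n ((OS17.AA n + OS17.MM n) * OS17.CA n ^ (k+1)) = 0 := by
      rw [map_mul, map_add, map_pow, OS17.mk_A, OS17.mk_M, OS17.mk_C, add_mul]
      exact h0
    have h2 := OS17.mk_D_zero n _ hmk
    rw [OS17.key2 n hn1 k, map_sub, map_smul, map_smul, map_mul, map_mul, map_pow,
      map_pow, OS17.mk_A, OS17.mk_M, OS17.mk_C] at h2
    have h3 : (-(((k:ℚ)+1) * ((n : ℚ) + 1))) • (aOS n * mOS n * cOS n ^ k)
        + (OS17.fD n (OS17.VA n) + OS17.fD n (OS17.WA n)) • (cOS n ^ (k+1)) = 0 := by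
      rw [neg_smul, add_comm, ← sub_eq_add_neg]
      exact h2
    rw [show k + 1 - 1 = k from rfl] at hind
    have h4 := (LinearIndependent.pair_iff.mp hind _ _ h3).1
    rw [neg_eq_zero] at h4
    have hne : (((k:ℚ)+1) * ((n : ℚ) + 1)) ≠ 0 := by positivity
    exact hne h4

end
end
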